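/- arXiv:1201.2693 — 6 statements merged into one kernel-verified Lean document; each statement's English description precedes it below -/
import Mathlib

section
/- Let X = (X_n)_{n≥1} be a weak solution of the dyadic model system X_n' = k_{n-1} X_{n-1}^2 - k_n X_n X_{n+1} (with X_0 ≡ 0, k_0 = 0, k_n = 2^{βn}). If X_n(t_0) > 0 for some t_0 ≥ 0, then X_n(t) > 0 for all t ≥ t_0; similarly if X_n(t_0) ≥ 0, then X_n(t) ≥ 0 for all t ≥ t_0. -/
/-!
The equation for `X n` is linear in `X n`: `X n' + (k n X (n+1)) X n = k (n-1) X (n-1)² ≥ 0`.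
Multiplying by the integrating factor `exp (∫ k n X (n+1))` therefore gives a nondecreasing
function, which has the sign of `X n` and equals `X n t₀` at `t₀`.
-/

open Set

section IntegratingFactor

variable {f f' B : ℝ → ℝ} {t₀ : ℝ}

theorem monotoneOn_mul_exp_integral (hB : Continuous B)
    (hf : ∀ t, t₀ ≤ t → HasDerivAt f (f' t) t)
    (hf' : ∀ t, t₀ ≤ t → -(B t * f t) ≤ f' t) :
    MonotoneOn (fun t => f t * Real.exp (∫ s in t₀..t, B s)) (Ici t₀) := by
  have hg : ∀ t, t₀ ≤ t → HasDerivAt (fun t => f t * Real.exp (∫ s in t₀..t, B s))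
      ((f' t + B t * f t) * Real.exp (∫ s in t₀..t, B s)) t := fun t ht =>
    ((hf t ht).mul (hB.integral_hasStrictDerivAt t₀ t).hasDerivAt.exp).congr_deriv (by ring)
  refine monotoneOn_of_deriv_nonneg (convex_Ici t₀)
    (fun t ht => (hg t ht).continuousAt.continuousWithinAt)
    (fun t ht => ?_) (fun t ht => ?_) <;> rw [interior_Ici] at ht
  · exact (hg t ht.le).differentiableAt.differentiableWithinAt
  · rw [(hg t ht.le).deriv]
    exact mul_nonneg (by linarith [hf' t ht.le]) (Real.exp_pos _).le

theorem le_mul_exp_integral (hB : Continuous B)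
    (hf : ∀ t, t₀ ≤ t → HasDerivAt f (f' t) t)
    (hf' : ∀ t, t₀ ≤ t → -(B t * f t) ≤ f' t) {t : ℝ} (ht : t₀ ≤ t) :
    f t₀ ≤ f t * Real.exp (∫ s in t₀..t, B s) := by
  simpa using monotoneOn_mul_exp_integral hB hf hf' self_mem_Ici (mem_Ici.mpr ht) ht

theorem pos_of_hasDerivAt_ge_neg_mul (hB : Continuous B)
    (hf : ∀ t, t₀ ≤ t → HasDerivAt f (f' t) t)
    (hf' : ∀ t, t₀ ≤ t → -(B t * f t) ≤ f' t) (h₀ : 0 < f t₀) {t : ℝ} (ht : t₀ ≤ t) :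
    0 < f t :=
  pos_of_mul_pos_left (h₀.trans_le (le_mul_exp_integral hB hf hf' ht)) (Real.exp_pos _).le

theorem nonneg_of_hasDerivAt_ge_neg_mul (hB : Continuous B)
    (hf : ∀ t, t₀ ≤ t → HasDerivAt f (f' t) t)
    (hf' : ∀ t, t₀ ≤ t → -(B t * f t) ≤ f' t) (h₀ : 0 ≤ f t₀) {t : ℝ} (ht : t₀ ≤ t) :
    0 ≤ f t :=
  nonneg_of_mul_nonneg_left (h₀.trans (le_mul_exp_integral hB hf hf' ht)) (Real.exp_pos _)

end IntegratingFactor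

theorem dyadic_positivity_maintained_general
    (β : ℝ) (k : ℕ → ℝ)
    (hk0 : k 0 = 0) (hk : ∀ n : ℕ, 1 ≤ n → k n = (2:ℝ) ^ (β * (n:ℝ)))
    (X : ℕ → ℝ → ℝ)
    (hsol : ∀ n : ℕ, 1 ≤ n → ∀ t : ℝ, 0 ≤ t →
      HasDerivAt (X n)
        (k (n-1) * (X (n-1) t) ^ 2 - k n * X n t * X (n+1) t) t)
    (n : ℕ) (hn : 1 ≤ n) (t₀ : ℝ) (ht₀ : 0 ≤ t₀) :
    (0 < X n t₀ → ∀ t : ℝ, t₀ ≤ t → 0 < X n t) ∧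
    (0 ≤ X n t₀ → ∀ t : ℝ, t₀ ≤ t → 0 ≤ X n t) := by
  have hk_nonneg : 0 ≤ k (n - 1) := by
    rcases (n - 1).eq_zero_or_pos with h | h
    · simp [h, hk0]
    · rw [hk (n - 1) h]; positivity
  -- `X (n+1)` is only known to be continuous on `[t₀, ∞)`, so freeze it to the left of `t₀`.
  set B : ℝ → ℝ := fun s => k n * X (n + 1) (max s t₀)
  have hB : Continuous B := by
    refine continuous_const.mul (ContinuousOn.comp_continuous (s := Ici t₀) ?_
      (continuous_id.max continuous_const) fun s => le_max_right s t₀)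
    exact fun s hs => (hsol (n + 1) (by omega) s (ht₀.trans hs)).continuousAt.continuousWithinAt
  have hf := fun t (ht : t₀ ≤ t) => hsol n hn t (ht₀.trans ht)
  have hf' : ∀ t, t₀ ≤ t → -(B t * X n t) ≤
      k (n - 1) * X (n - 1) t ^ 2 - k n * X n t * X (n + 1) t := fun t ht => by
    simp only [B, max_eq_left ht]
    linarith [mul_nonneg hk_nonneg (sq_nonneg (X (n - 1) t))]
  exact ⟨fun h₀ _ ht => pos_of_hasDerivAt_ge_neg_mul hB hf hf' h₀ ht,
    fun h₀ _ ht => nonneg_of_hasDerivAt_ge_neg_mul hB hf hf' h₀ ht⟩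

/-- Positivity is maintained: for a weak solution of the inviscid dyadic model,
if `X n t₀ > 0` then `X n t > 0` for all `t ≥ t₀`, and similarly with `≥ 0`. -/
theorem dyadic_positivity_maintained
    (β : ℝ) (hβ : 0 < β) (k : ℕ → ℝ)
    (hk0 : k 0 = 0) (hk : ∀ n : ℕ, 1 ≤ n → k n = (2:ℝ) ^ (β * (n:ℝ)))
    (X : ℕ → ℝ → ℝ) (hX0 : ∀ t : ℝ, X 0 t = 0)
    (hsol : ∀ n : ℕ, 1 ≤ n → ∀ t : ℝ, 0 ≤ t →
      HasDerivAt (X n)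
        (k (n-1) * (X (n-1) t) ^ 2 - k n * X n t * X (n+1) t) t)
    (n : ℕ) (hn : 1 ≤ n) (t₀ : ℝ) (ht₀ : 0 ≤ t₀) :
    (0 < X n t₀ → ∀ t : ℝ, t₀ ≤ t → 0 < X n t) ∧
    (0 ≤ X n t₀ → ∀ t : ℝ, t₀ ≤ t → 0 ≤ X n t) :=
  dyadic_positivity_maintained_general β k hk0 hk X hsol n hn t₀ ht₀
end

section
/- If the initial condition x of the dyadic model has infinitely many non-negative components (i.e., there is an increasing sequence (n_i) with x_{n_i} ≥ 0), then every finite energy weak solution X with X(0) = x is Leray-Hopf: the ℓ² norm t ↦ ‖X(t)‖_{ℓ²} is non-increasing in t. -/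
/-!
Two facts about a weak solution drive the proof. First, the equation for `X n` reads
`X n' + (k n * X (n+1)) * X n = k (n-1) * X (n-1) ^ 2 ≥ 0`, so with an integrating factor `X n`
can never leave `[0, ∞)`: a component that starts non-negative stays non-negative. Second, the
partial energy `E N` has derivative `-2 k N (X N)² X (N+1)`, so it is non-increasing as soon as
`X (N+1)` stays non-negative. Infinitely many such indices `N` give `E N t ≤ E N s` along a
cofinal set of `N`, which passes to the full `ℓ²` norms.
-/

open Set Filter Finset

def IsDyadicWeakSolution (k : ℕ → ℝ) (X : ℕ → ℝ → ℝ) : Prop :=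
  ∀ n : ℕ, 1 ≤ n → ∀ t : ℝ, 0 ≤ t →
    HasDerivAt (X n) (k (n-1) * (X (n-1) t) ^ 2 - k n * X n t * X (n+1) t) t

def partialEnergy (X : ℕ → ℝ → ℝ) (N : ℕ) (t : ℝ) : ℝ :=
  ∑ i ∈ range (N + 1), X i t ^ 2

/-- Comparison principle for `f' + b f ≥ 0`: `f · exp (∫₀ b)` is non-decreasing on `[0, ∞)`. -/
theorem nonneg_of_hasDerivAt_add_mul_nonneg {f f' b : ℝ → ℝ} (hb : ContinuousOn b (Ici 0))
    (hf : ∀ u, 0 ≤ u → HasDerivAt f (f' u) u) (hineq : ∀ u, 0 ≤ u → 0 ≤ f' u + b u * f u)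
    (h0 : 0 ≤ f 0) {t : ℝ} (ht : 0 ≤ t) : 0 ≤ f t := by
  -- `b` extended to `ℝ` by `b 0` on `(-∞, 0)`, so that `∫₀ c` is differentiable everywhere
  set c : ℝ → ℝ := b ∘ fun u => max u 0
  have hc : Continuous c :=
    hb.comp_continuous (continuous_id.max continuous_const) fun u => le_max_right u 0
  set g : ℝ → ℝ := fun u => ∫ v in (0:ℝ)..u, c v
  set Y : ℝ → ℝ := fun u => f u * Real.exp (g u)
  have hY : ∀ u, 0 ≤ u → HasDerivAt Y ((f' u + b u * f u) * Real.exp (g u)) u := by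
    intro u hu
    refine ((hf u hu).mul (hc.integral_hasStrictDerivAt 0 u).hasDerivAt.exp).congr_deriv ?_
    simp only [c, g, Function.comp_apply, max_eq_left hu]
    ring
  have hmono : MonotoneOn Y (Ici 0) :=
    monotoneOn_of_hasDerivWithinAt_nonneg (convex_Ici 0)
      (fun u hu => (hY u hu).continuousAt.continuousWithinAt)
      (fun u hu => by rw [interior_Ici] at hu; exact (hY u hu.le).hasDerivWithinAt)
      (fun u hu => by
        rw [interior_Ici] at hu
        exact mul_nonneg (hineq u hu.le) (Real.exp_pos _).le)
  have hY0 : Y 0 = f 0 := by simp [Y, g]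
  have hYt : 0 ≤ Y t := (hY0 ▸ h0).trans (hmono self_mem_Ici ht ht)
  exact (mul_nonneg_iff_of_pos_right (Real.exp_pos (g t))).mp hYt

section DyadicModel

variable {k : ℕ → ℝ} {X : ℕ → ℝ → ℝ}

theorem IsDyadicWeakSolution.nonneg_of_nonneg_zero (hX : IsDyadicWeakSolution k X)
    (hk : ∀ n, 0 ≤ k n) {n : ℕ} (hn : 1 ≤ n) (h0 : 0 ≤ X n 0) {t : ℝ} (ht : 0 ≤ t) :
    0 ≤ X n t := by
  refine nonneg_of_hasDerivAt_add_mul_nonneg (b := fun u => k n * X (n+1) u)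
    (fun u hu => ((hX (n+1) (by omega) u hu).continuousAt.const_mul _).continuousWithinAt)
    (hX n hn) (fun u _ => ?_) h0 ht
  have : 0 ≤ k (n-1) * X (n-1) u ^ 2 := mul_nonneg (hk _) (sq_nonneg _)
  linarith

theorem IsDyadicWeakSolution.hasDerivAt_partialEnergy (hX : IsDyadicWeakSolution k X)
    (hX0 : ∀ t, X 0 t = 0) (N : ℕ) {t : ℝ} (ht : 0 ≤ t) :
    HasDerivAt (partialEnergy X N) (-(2 * k N * X N t ^ 2 * X (N+1) t)) t := by
  induction N with
  | zero =>
    have hE : partialEnergy X 0 = fun _ => 0 := by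
      funext u; simp [partialEnergy, hX0]
    simpa [hE, hX0] using hasDerivAt_const t (0:ℝ)
  | succ N ih =>
    have hE : partialEnergy X (N+1) = fun u => partialEnergy X N u + X (N+1) u ^ 2 := by
      funext u; exact sum_range_succ _ _
    rw [hE]
    refine (ih.add ((hX (N+1) (by omega) t ht).pow 2)).congr_deriv ?_
    simp only [Nat.add_sub_cancel, Nat.cast_ofNat]
    ring

theorem IsDyadicWeakSolution.antitoneOn_partialEnergy (hX : IsDyadicWeakSolution k X)
    (hX0 : ∀ t, X 0 t = 0) (hk : ∀ n, 0 ≤ k n) {N : ℕ}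
    (hnext : ∀ t, 0 ≤ t → 0 ≤ X (N+1) t) :
    AntitoneOn (partialEnergy X N) (Ici 0) :=
  antitoneOn_of_hasDerivWithinAt_nonpos (convex_Ici 0)
    (fun u hu => (hX.hasDerivAt_partialEnergy hX0 N hu).continuousAt.continuousWithinAt)
    (fun u hu => by
      rw [interior_Ici] at hu
      exact (hX.hasDerivAt_partialEnergy hX0 N hu.le).hasDerivWithinAt)
    (fun u hu => by
      rw [interior_Ici] at hu
      have : 0 ≤ 2 * k N * X N u ^ 2 * X (N+1) u := by
        have := hnext u hu.le
        have := hk N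
        positivity
      linarith)

end DyadicModel

theorem tsum_le_tsum_of_frequently_sum_range_le {f g : ℕ → ℝ} (hf : ∀ n, 0 ≤ f n)
    (hg : Summable g) (hg' : ∀ n, 0 ≤ g n)
    (hfg : ∃ᶠ N in atTop, ∑ i ∈ range N, f i ≤ ∑ i ∈ range N, g i) :
    ∑' n, f n ≤ ∑' n, g n := by
  refine Real.tsum_le_of_sum_range_le hf fun n => ?_
  obtain ⟨N, hnN, hN⟩ := frequently_atTop.mp hfg n
  calc ∑ i ∈ range n, f i
      ≤ ∑ i ∈ range N, f i := sum_le_sum_of_subset_of_nonneg (range_subset_range.mpr hnN)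
        fun i _ _ => hf i
    _ ≤ ∑ i ∈ range N, g i := hN
    _ ≤ ∑' i, g i := hg.sum_le_tsum _ fun i _ => hg' i

theorem dyadic_infinitely_many_nonneg_implies_LerayHopf_general
    (β : ℝ) (k : ℕ → ℝ)
    (hk0 : k 0 = 0) (hk : ∀ n : ℕ, 1 ≤ n → k n = (2:ℝ) ^ (β * (n:ℝ)))
    (x : ℕ → ℝ)
    (X : ℕ → ℝ → ℝ) (hX0 : ∀ t : ℝ, X 0 t = 0)
    (hinit : ∀ n : ℕ, X n 0 = x n)
    (hsol : ∀ n : ℕ, 1 ≤ n → ∀ t : ℝ, 0 ≤ t →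
      HasDerivAt (X n)
        (k (n-1) * (X (n-1) t) ^ 2 - k n * X n t * X (n+1) t) t)
    (hfin : ∀ t : ℝ, 0 ≤ t → Summable (fun n : ℕ => (X n t) ^ 2))
    (hinfnonneg : ∀ m : ℕ, ∃ n : ℕ, m ≤ n ∧ 1 ≤ n ∧ 0 ≤ x n) :
    ∀ s t : ℝ, 0 ≤ s → s ≤ t →
      (∑' n : ℕ, (X n t) ^ 2) ≤ ∑' n : ℕ, (X n s) ^ 2 := by
  have hk_nonneg : ∀ n, 0 ≤ k n := fun n => by
    rcases Nat.eq_zero_or_pos n with rfl | hn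
    · exact hk0.ge
    · rw [hk n hn]; positivity
  have hX : IsDyadicWeakSolution k X := hsol
  intro s t hs hst
  refine tsum_le_tsum_of_frequently_sum_range_le (fun _ => sq_nonneg _) (hfin s hs)
    (fun _ => sq_nonneg _) (frequently_atTop.mpr fun m => ?_)
  obtain ⟨n, hmn, hn, hxn⟩ := hinfnonneg m
  obtain ⟨N, rfl⟩ : ∃ N, n = N + 1 := ⟨n - 1, by omega⟩
  have hnext : ∀ u, 0 ≤ u → 0 ≤ X (N+1) u := fun u hu =>
    hX.nonneg_of_nonneg_zero hk_nonneg hn (hinit _ ▸ hxn) hu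
  exact ⟨N + 1, hmn, hX.antitoneOn_partialEnergy hX0 hk_nonneg hnext hs (hs.trans hst) hst⟩

/-- If the initial condition has infinitely many non-negative components, then
every finite energy weak solution is Leray–Hopf: `t ↦ ‖X t‖_{ℓ²}` is non-increasing. -/
theorem dyadic_infinitely_many_nonneg_implies_LerayHopf
    (β : ℝ) (hβ : 0 < β) (k : ℕ → ℝ)
    (hk0 : k 0 = 0) (hk : ∀ n : ℕ, 1 ≤ n → k n = (2:ℝ) ^ (β * (n:ℝ)))
    (x : ℕ → ℝ) (hx0 : x 0 = 0)
    (X : ℕ → ℝ → ℝ) (hX0 : ∀ t : ℝ, X 0 t = 0)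
    (hinit : ∀ n : ℕ, X n 0 = x n)
    (hsol : ∀ n : ℕ, 1 ≤ n → ∀ t : ℝ, 0 ≤ t →
      HasDerivAt (X n)
        (k (n-1) * (X (n-1) t) ^ 2 - k n * X n t * X (n+1) t) t)
    (hfin : ∀ t : ℝ, 0 ≤ t → Summable (fun n : ℕ => (X n t) ^ 2))
    (hinfnonneg : ∀ m : ℕ, ∃ n : ℕ, m ≤ n ∧ 1 ≤ n ∧ 0 ≤ x n) :
    ∀ s t : ℝ, 0 ≤ s → s ≤ t →
      (∑' n : ℕ, (X n t) ^ 2) ≤ ∑' n : ℕ, (X n s) ^ 2 :=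
  dyadic_infinitely_many_nonneg_implies_LerayHopf_general β k hk0 hk x X hX0 hinit hsol hfin
    hinfnonneg
end

section
/- Let x ∈ ℓ² with x_n ≥ 0 for all n, X a weak solution with initial condition x, and T > 0. Let c = c(β) be the constant in the tail-measure bound L{t : X_N(t) > M} ≤ c‖x‖²/(k_N M³). Then for all N ≥ 1 with k_N T > c / ‖x‖, one has ∫_0^T X_N(t)³ dt ≤ (c‖x‖²/k_N)(1 + log(‖x‖T/c) + Nβ log 2). In particular, ∫_0^T X_N³ dt = O(N/k_N) as N → ∞. -/
/-!
By the layer cake formula, `∫ f ^ p dμ = ∫₀^∞ p t^(p-1) μ{f > t} dt`. Bound the tail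
`μ{f > t}` by the total mass `T` for `t ≤ a`, by the hypothesis `A / t ^ p` for `a < t ≤ b`,
and by `0` above the sup bound `b`: this gives `T a^p + p A log (b / a)`, and the choice
`T a^p = A`, where the two tail bounds cross, gives `A (1 + log (T b^p / A))`. For `X_N` on
`[0, T]`, `A = c‖x‖²/k_N`, `b = ‖x‖` and `p = 3`, so `T b^p / A = (‖x‖T/c) k_N` with
`log k_N = Nβ log 2`.
-/

open MeasureTheory Set

section TailBound

variable {α : Type*} [MeasurableSpace α] {μ : Measure α} {f : α → ℝ} {p : ℕ}
  {T A a b : ℝ}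

theorem integral_natCast_mul_pow_pred (hp : p ≠ 0) (y : ℝ) :
    ∫ t in (0 : ℝ)..y, (p : ℝ) * t ^ (p - 1) = y ^ p := by
  rw [intervalIntegral.integral_const_mul, integral_pow,
    Nat.sub_add_cancel (Nat.one_le_iff_ne_zero.2 hp), zero_pow hp, sub_zero,
    Nat.cast_pred (Nat.pos_of_ne_zero hp), sub_add_cancel]
  field_simp

theorem lintegral_ofReal_pow_eq_lintegral_meas_lt (hp : p ≠ 0) (f_nn : 0 ≤ᵐ[μ] f)
    (f_mble : AEMeasurable f μ) :
    ∫⁻ ω, ENNReal.ofReal (f ω ^ p) ∂μ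
      = ∫⁻ t in Ioi 0, μ {ω | t < f ω} * ENNReal.ofReal (p * t ^ (p - 1)) := by
  simpa only [integral_natCast_mul_pow_pred hp] using
    lintegral_comp_eq_lintegral_meas_lt_mul μ f_nn f_mble
      (fun t _ => (by fun_prop : Continuous fun t : ℝ => (p : ℝ) * t ^ (p - 1)).intervalIntegrable
        0 t)
      (ae_restrict_of_forall_mem measurableSet_Ioi fun t (ht : 0 < t) => by positivity)

theorem setLIntegral_Ioc_ofReal_natCast_mul_pow_pred (hp : p ≠ 0) (ha : 0 ≤ a) :
    ∫⁻ t in Ioc 0 a, ENNReal.ofReal (p * t ^ (p - 1)) = ENNReal.ofReal (a ^ p) := by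
  rw [← ofReal_integral_eq_lintegral_ofReal, ← intervalIntegral.integral_of_le ha,
    integral_natCast_mul_pow_pred hp]
  · exact (by fun_prop : Continuous fun t : ℝ => (p : ℝ) * t ^ (p - 1)).integrableOn_Ioc
  · exact ae_restrict_of_forall_mem measurableSet_Ioc fun t ht => by
      have : 0 < t := ht.1
      positivity

theorem setLIntegral_Ioc_meas_lt_mul_le_of_measure_univ_le (hp : p ≠ 0)
    (hμ : μ univ ≤ ENNReal.ofReal T) (ha : 0 ≤ a) :
    ∫⁻ t in Ioc 0 a, μ {ω | t < f ω} * ENNReal.ofReal (p * t ^ (p - 1))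
      ≤ ENNReal.ofReal T * ENNReal.ofReal (a ^ p) := by
  calc ∫⁻ t in Ioc 0 a, μ {ω | t < f ω} * ENNReal.ofReal (p * t ^ (p - 1))
      ≤ ∫⁻ t in Ioc 0 a, ENNReal.ofReal T * ENNReal.ofReal (p * t ^ (p - 1)) :=
        lintegral_mono fun t => mul_le_mul_left ((measure_mono (subset_univ _)).trans hμ) _
    _ = ENNReal.ofReal T * ENNReal.ofReal (a ^ p) := by
        rw [lintegral_const_mul _ (by fun_prop),
          setLIntegral_Ioc_ofReal_natCast_mul_pow_pred hp ha]

theorem setLIntegral_Ioc_meas_lt_mul_le_of_tail_le (hp : p ≠ 0) (hA : 0 ≤ A)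
    (htail : ∀ t, 0 < t → μ {ω | t < f ω} ≤ ENNReal.ofReal (A / t ^ p)) (ha : 0 < a)
    (hab : a ≤ b) :
    ∫⁻ t in Ioc a b, μ {ω | t < f ω} * ENNReal.ofReal (p * t ^ (p - 1))
      ≤ ENNReal.ofReal (p * A * Real.log (b / a)) := by
  have hpos : ∀ t ∈ Ioc a b, 0 < t := fun t ht => ha.trans ht.1
  calc ∫⁻ t in Ioc a b, μ {ω | t < f ω} * ENNReal.ofReal (p * t ^ (p - 1))
      ≤ ∫⁻ t in Ioc a b, ENNReal.ofReal (p * A * t⁻¹) := by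
        refine setLIntegral_mono (by fun_prop) fun t ht => ?_
        have ht : 0 < t := hpos t ht
        calc μ {ω | t < f ω} * ENNReal.ofReal (p * t ^ (p - 1))
            ≤ ENNReal.ofReal (A / t ^ p) * ENNReal.ofReal (p * t ^ (p - 1)) :=
              mul_le_mul_left (htail t ht) _
          _ = ENNReal.ofReal (p * A * t⁻¹) := by
              rw [← ENNReal.ofReal_mul (by positivity)]
              congr 1
              rw [← Nat.sub_add_cancel (Nat.one_le_iff_ne_zero.2 hp), pow_succ]
              field_simp
              simp
    _ = ENNReal.ofReal (p * A * Real.log (b / a)) := by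
        rw [← ofReal_integral_eq_lintegral_ofReal, ← intervalIntegral.integral_of_le hab,
          intervalIntegral.integral_const_mul, integral_inv]
        · rw [uIcc_of_le hab]
          exact fun h => (lt_irrefl 0) (ha.trans_le h.1)
        · exact (continuousOn_const.mul (continuousOn_inv₀.mono fun t ht => (ha.trans_le ht.1).ne')
            |>.integrableOn_compact isCompact_Icc).mono_set Ioc_subset_Icc_self
        · exact ae_restrict_of_forall_mem measurableSet_Ioc fun t ht => by
            have := hpos t ht
            positivity

theorem setLIntegral_Ioi_meas_lt_mul_eq_zero (hfb : ∀ᵐ ω ∂μ, f ω ≤ b) (g : ℝ → ENNReal) :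
    ∫⁻ t in Ioi b, μ {ω | t < f ω} * g t = 0 := by
  have hnull : ∀ t ∈ Ioi b, μ {ω | t < f ω} = 0 := fun t ht =>
    measure_eq_zero_iff_ae_notMem.2 <| hfb.mono fun ω hω h => (ht.trans h).not_ge hω
  rw [setLIntegral_congr_fun measurableSet_Ioi fun t ht => by rw [hnull t ht, zero_mul]]
  exact lintegral_zero

theorem lintegral_ofReal_pow_le_of_tail_le (hp : p ≠ 0) (f_nn : 0 ≤ᵐ[μ] f)
    (f_mble : AEMeasurable f μ) (hfb : ∀ᵐ ω ∂μ, f ω ≤ b) (hT : 0 ≤ T)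
    (hμ : μ univ ≤ ENNReal.ofReal T) (hA : 0 ≤ A)
    (htail : ∀ t, 0 < t → μ {ω | t < f ω} ≤ ENNReal.ofReal (A / t ^ p)) (ha : 0 < a)
    (hab : a ≤ b) :
    ∫⁻ ω, ENNReal.ofReal (f ω ^ p) ∂μ ≤ ENNReal.ofReal (T * a ^ p + p * A * Real.log (b / a)) := by
  set F : ℝ → ENNReal := fun t => μ {ω | t < f ω} * ENNReal.ofReal (p * t ^ (p - 1))
  have hsplit : Ioi (0 : ℝ) = (Ioc 0 a ∪ Ioc a b) ∪ Ioi b := by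
    rw [Ioc_union_Ioc_eq_Ioc ha.le hab, Ioc_union_Ioi_eq_Ioi (ha.le.trans hab)]
  have hlog : 0 ≤ Real.log (b / a) := Real.log_nonneg ((one_le_div ha).2 hab)
  rw [lintegral_ofReal_pow_eq_lintegral_meas_lt hp f_nn f_mble, ENNReal.ofReal_add (by positivity)
    (by positivity), ENNReal.ofReal_mul hT]
  calc ∫⁻ t in Ioi 0, F t
      ≤ (∫⁻ t in Ioc 0 a, F t) + (∫⁻ t in Ioc a b, F t) + ∫⁻ t in Ioi b, F t := by
        rw [hsplit]
        exact (lintegral_union_le _ _ _).trans (add_le_add_left (lintegral_union_le _ _ _) _)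
    _ ≤ ENNReal.ofReal T * ENNReal.ofReal (a ^ p) + ENNReal.ofReal (p * A * Real.log (b / a))
          + 0 := by
        gcongr
        · exact setLIntegral_Ioc_meas_lt_mul_le_of_measure_univ_le hp hμ ha.le
        · exact setLIntegral_Ioc_meas_lt_mul_le_of_tail_le hp hA htail ha hab
        · exact (setLIntegral_Ioi_meas_lt_mul_eq_zero hfb _).le
    _ = _ := add_zero _

theorem integral_pow_le_mul_one_add_log_of_tail_le (hp : p ≠ 0) (f_nn : 0 ≤ᵐ[μ] f)
    (f_mble : AEMeasurable f μ) (hfb : ∀ᵐ ω ∂μ, f ω ≤ b) (hμ : μ univ ≤ ENNReal.ofReal T)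
    (hA : 0 < A) (hb : 0 ≤ b) (hAT : A ≤ T * b ^ p)
    (htail : ∀ t, 0 < t → μ {ω | t < f ω} ≤ ENNReal.ofReal (A / t ^ p)) :
    ∫ ω, f ω ^ p ∂μ ≤ A * (1 + Real.log (T * b ^ p / A)) := by
  have hT : 0 < T := pos_of_mul_pos_left (hA.trans_le hAT) (by positivity)
  set a : ℝ := (A / T) ^ (p⁻¹ : ℝ)
  have ha_pow : a ^ p = A / T := Real.rpow_inv_natCast_pow (by positivity) hp
  have ha : 0 < a := by positivity
  have hab : a ≤ b := le_of_pow_le_pow_left₀ hp hb <| by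
    rw [ha_pow, div_le_iff₀ hT, mul_comm]
    exact hAT
  have hlog : p * Real.log (b / a) = Real.log (T * b ^ p / A) := by
    rw [← Real.log_pow, div_pow, ha_pow]
    congr 1
    field_simp
  rw [integral_eq_lintegral_of_nonneg_ae (f_nn.mono fun ω hω => pow_nonneg hω p)
    (f_mble.pow_const p).aestronglyMeasurable]
  refine ENNReal.toReal_le_of_le_ofReal ?_ ((lintegral_ofReal_pow_le_of_tail_le hp f_nn f_mble hfb
    hT.le hμ hA.le htail ha hab).trans_eq ?_)
  · have := Real.log_nonneg ((one_le_div hA).2 hAT)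
    positivity
  · rw [ha_pow, mul_right_comm, hlog]
    field_simp

end TailBound

theorem intervalIntegral_pow_le_mul_one_add_log_of_tail_le {f : ℝ → ℝ} {p : ℕ} {T A b : ℝ}
    (hp : p ≠ 0) (hT : 0 < T) (hf : ContinuousOn f (Ioc 0 T))
    (hrange : ∀ t ∈ Ioc 0 T, f t ∈ Icc 0 b)
    (hA : 0 < A) (hAT : A ≤ T * b ^ p)
    (htail : ∀ M, 0 < M → volume ({t | M < f t} ∩ Ioc 0 T) ≤ ENNReal.ofReal (A / M ^ p)) :
    ∫ t in (0 : ℝ)..T, f t ^ p ≤ A * (1 + Real.log (T * b ^ p / A)) := by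
  have hmem : T ∈ Ioc 0 T := ⟨hT, le_rfl⟩
  rw [intervalIntegral.integral_of_le hT.le]
  refine integral_pow_le_mul_one_add_log_of_tail_le hp
    (ae_restrict_of_forall_mem measurableSet_Ioc fun t ht => (hrange t ht).1)
    (hf.aemeasurable measurableSet_Ioc)
    (ae_restrict_of_forall_mem measurableSet_Ioc fun t ht => (hrange t ht).2)
    (by rw [Measure.restrict_apply_univ, Real.volume_Ioc, sub_zero]) hA
    ((hrange T hmem).1.trans (hrange T hmem).2) hAT fun M hM => ?_
  rw [Measure.restrict_apply' measurableSet_Ioc]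
  exact htail M hM

theorem dyadic_integral_X3_bound_general
    (β : ℝ) (k : ℕ → ℝ)
    (hk : ∀ n : ℕ, 1 ≤ n → k n = (2:ℝ) ^ (β * (n:ℝ)))
    (nx : ℝ)
    (X : ℕ → ℝ → ℝ)
    (hsol : ∀ n : ℕ, 1 ≤ n → ∀ t : ℝ, 0 ≤ t →
      HasDerivAt (X n)
        (k (n-1) * (X (n-1) t) ^ 2 - k n * X n t * X (n+1) t) t)
    (T : ℝ) (hT : 0 < T)
    (c : ℝ) (hc : 0 < c)
    (N : ℕ) (hN : 1 ≤ N)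
    (hbdd : ∀ t : ℝ, 0 ≤ t → X N t ∈ Set.Icc 0 nx)
    (htail : ∀ M : ℝ, 0 < M →
      volume {t : ℝ | 0 ≤ t ∧ M < X N t}
        ≤ ENNReal.ofReal (c * nx ^ 2 / (k N * M ^ 3)))
    (hNT : c / nx < k N * T) :
    ∫ t in (0:ℝ)..T, (X N t) ^ 3
      ≤ c * nx ^ 2 / k N
        * (1 + Real.log (nx * T / c) + (N:ℝ) * β * Real.log 2) := by
  obtain rfl | hnx := ((hbdd 0 le_rfl).1.trans (hbdd 0 le_rfl).2).eq_or_lt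
  · have hzero : EqOn (fun t => X N t ^ 3) 0 (uIcc 0 T) := fun t ht => by
      rw [uIcc_of_le hT.le] at ht
      have hXt := hbdd t ht.1
      simp [le_antisymm hXt.2 hXt.1]
    simp [intervalIntegral.integral_congr hzero]
  have hkN : k N = 2 ^ (β * N) := hk N hN
  have hkN_pos : 0 < k N := hkN ▸ Real.rpow_pos_of_pos two_pos _
  have hAT : c * nx ^ 2 / k N ≤ T * nx ^ 3 := by
    rw [div_lt_iff₀ hnx] at hNT
    rw [div_le_iff₀ hkN_pos]
    nlinarith [pow_pos hnx 2]
  refine (intervalIntegral_pow_le_mul_one_add_log_of_tail_le three_ne_zero hT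
    (fun t ht => (hsol N hN t ht.1.le).continuousAt.continuousWithinAt)
    (fun t ht => hbdd t ht.1.le) (by positivity) hAT fun M hM => ?_).trans_eq ?_
  · rw [div_div]
    refine (measure_mono fun t ht => ?_).trans (htail M hM)
    exact ⟨ht.2.1.le, ht.1⟩
  · have hratio : T * nx ^ 3 / (c * nx ^ 2 / k N) = nx * T / c * k N := by
      field_simp
    rw [hratio, Real.log_mul (by positivity) hkN_pos.ne', hkN, Real.log_rpow two_pos]
    ring

/-- Integral estimate for `∫_0^T X_N³`: under the tail-measure bound with
constant `c`, for `N` with `k N * T > c / ‖x‖` one has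
`∫_0^T X_N³ ≤ (c‖x‖²/k_N)(1 + log(‖x‖T/c) + Nβ log 2)`. -/
theorem dyadic_integral_X3_bound
    (β : ℝ) (hβ : 0 < β) (k : ℕ → ℝ)
    (hk0 : k 0 = 0) (hk : ∀ n : ℕ, 1 ≤ n → k n = (2:ℝ) ^ (β * (n:ℝ)))
    (x : ℕ → ℝ) (hx0 : x 0 = 0) (hxnn : ∀ n : ℕ, 0 ≤ x n)
    (hxl2 : Summable (fun n : ℕ => (x n) ^ 2))
    (nx : ℝ) (hnx : nx = Real.sqrt (∑' n : ℕ, (x n) ^ 2))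
    (X : ℕ → ℝ → ℝ) (hX0 : ∀ t : ℝ, X 0 t = 0)
    (hinit : ∀ n : ℕ, X n 0 = x n)
    (hsol : ∀ n : ℕ, 1 ≤ n → ∀ t : ℝ, 0 ≤ t →
      HasDerivAt (X n)
        (k (n-1) * (X (n-1) t) ^ 2 - k n * X n t * X (n+1) t) t)
    (T : ℝ) (hT : 0 < T)
    (c : ℝ) (hc : 0 < c)
    (N : ℕ) (hN : 1 ≤ N)
    (hbdd : ∀ t : ℝ, 0 ≤ t → X N t ∈ Set.Icc 0 nx)
    (htail : ∀ M : ℝ, 0 < M →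
      volume {t : ℝ | 0 ≤ t ∧ M < X N t}
        ≤ ENNReal.ofReal (c * nx ^ 2 / (k N * M ^ 3)))
    (hNT : c / nx < k N * T) :
    ∫ t in (0:ℝ)..T, (X N t) ^ 3
      ≤ c * nx ^ 2 / k N
        * (1 + Real.log (nx * T / c) + (N:ℝ) * β * Real.log 2) :=
  dyadic_integral_X3_bound_general β k hk nx X hsol T hT c hc N hN hbdd htail hNT
end

section
/- (Uniqueness) Let β > 0 and x ∈ ℓ² with x_n ≥ 0 for all n. Then there is at most one weak solution X of the dyadic model with initial condition x. (Equivalently: if X and Y are two weak solutions with the same non-negative ℓ² initial condition, then X_n(t) = Y_n(t) for all n and t ≥ 0.) -/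
/-!
Solutions with non-negative data stay non-negative, and the energy identity
`∑_{m ≤ n} X_m(T)² + 2 ∫₀ᵀ k_n X_n² X_{n+1} = ∑_{m ≤ n} X_m(0)²` bounds both `X_n²` and the
flux through mode `n` by `‖x‖²`. Differentiating `X_n X_{n+1}` and applying Cauchy–Schwarz with
weight `k_n X_{n+1}` gives `A_n ≤ ‖x‖² + C √(A_{n+1} + A_{n+2})` for `A_n = ∫₀ᵀ k_n X_n³`;
starting from the trivial bound `A_n = O(2^{βn})`, each use of this halves the growth exponent,
so `A_n = O(ρⁿ)` for some `ρ < 2`. For two solutions, the weights `2^{-m}` make the cross terms in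
the derivative of `∑_{m ≤ N} 2^{-m} (X_m - Y_m)²` telescope, leaving a boundary term of size
`2^{-N} (A_N + A_{N+1})`, which tends to zero.
-/

open MeasureTheory Set Filter Topology Finset

theorem sq_integral_mul_mul_le {α : Type*} [MeasurableSpace α] {μ : Measure α} {f g h : α → ℝ}
    (hg : 0 ≤ᵐ[μ] g) (hf : Integrable (fun x => f x ^ 2 * g x) μ)
    (hfh : Integrable (fun x => f x * g x * h x) μ) (hh : Integrable (fun x => g x * h x ^ 2) μ) :
    (∫ x, f x * g x * h x ∂μ) ^ 2 ≤ (∫ x, f x ^ 2 * g x ∂μ) * ∫ x, g x * h x ^ 2 ∂μ := by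
  have hquad : ∀ r : ℝ, 0 ≤ (∫ x, f x ^ 2 * g x ∂μ) * (r * r)
      + (-2 * ∫ x, f x * g x * h x ∂μ) * r + ∫ x, g x * h x ^ 2 ∂μ := by
    intro r
    have hexpand : (fun x => g x * (r * f x - h x) ^ 2)
        = fun x => (r * r) * (f x ^ 2 * g x) - (2 * r) * (f x * g x * h x) + g x * h x ^ 2 := by
      funext x; ring
    have hnonneg : 0 ≤ ∫ x, g x * (r * f x - h x) ^ 2 ∂μ :=
      integral_nonneg_of_ae (hg.mono fun x hx => mul_nonneg hx (sq_nonneg _))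
    have hdiff : Integrable (fun x => r * r * (f x ^ 2 * g x) - 2 * r * (f x * g x * h x)) μ :=
      (hf.const_mul _).sub (hfh.const_mul _)
    rw [hexpand, integral_add hdiff hh, integral_sub (hf.const_mul _) (hfh.const_mul _),
      integral_const_mul, integral_const_mul] at hnonneg
    linarith
  have hdisc := discrim_le_zero hquad
  rw [discrim] at hdisc
  nlinarith

theorem ContinuousOn.intervalIntegrable_of_Ici {f : ℝ → ℝ} {a b : ℝ} (hf : ContinuousOn f (Ici a))
    (hab : a ≤ b) : IntervalIntegrable f volume a b :=
  (hf.mono Icc_subset_Ici_self).intervalIntegrable_of_Icc hab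

/-- Integrating factor: `f * exp (∫ a)` is nondecreasing. -/
theorem nonneg_of_neg_mul_le_deriv {f f' a : ℝ → ℝ} (ha : ContinuousOn a (Ici 0))
    (hf : ∀ t, 0 ≤ t → HasDerivAt f (f' t) t) (hle : ∀ t, 0 < t → -(a t * f t) ≤ f' t)
    (h0 : 0 ≤ f 0) {T : ℝ} (hT : 0 ≤ T) : 0 ≤ f T := by
  set A : ℝ → ℝ := fun u => ∫ s in (0:ℝ)..u, a s
  have hA : ∀ t, 0 < t → HasDerivAt A (a t) t := fun t ht =>
    intervalIntegral.integral_hasDerivAt_right (ha.intervalIntegrable_of_Ici ht.le)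
      ((ha.mono Ioi_subset_Ici_self).stronglyMeasurableAtFilter isOpen_Ioi t ht)
      (ha.continuousAt (Ici_mem_nhds ht))
  have hAc : ContinuousOn A (Icc 0 T) := by
    have hint : IntegrableOn a (uIcc 0 T) := by
      rw [uIcc_of_le hT]; exact (ha.mono Icc_subset_Ici_self).integrableOn_Icc
    simpa only [uIcc_of_le hT] using intervalIntegral.continuousOn_primitive_interval hint
  have hfc : ContinuousOn f (Icc 0 T) := fun t ht => (hf t ht.1).continuousAt.continuousWithinAt
  have hmono : MonotoneOn (fun t => f t * Real.exp (A t)) (Icc 0 T) := by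
    refine monotoneOn_of_hasDerivWithinAt_nonneg (convex_Icc 0 T) (hfc.mul hAc.rexp)
      (f' := fun t => Real.exp (A t) * (f' t + a t * f t)) (fun t ht => ?_) (fun t ht => ?_)
    · rw [interior_Icc] at ht
      exact (((hf t ht.1.le).mul (hA t ht.1).exp).congr_deriv (by ring)).hasDerivWithinAt
    · rw [interior_Icc] at ht
      exact mul_nonneg (Real.exp_pos _).le (by linarith [hle t ht.1])
  have h := hmono (left_mem_Icc.2 hT) (right_mem_Icc.2 hT) hT
  simp only [A, intervalIntegral.integral_same, Real.exp_zero, mul_one] at h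
  exact nonneg_of_mul_nonneg_left (h0.trans h) (Real.exp_pos _)

theorem mul_add_mul_sq_le {a c L : ℝ} (ha : 0 ≤ a) (hc : 0 ≤ c) (hL : 0 ≤ L) :
    a * (a + L * c) ^ 2 ≤ (1 + L) ^ 2 * (a ^ 3 + c ^ 3) := by
  rcases le_total a c with h | h
  · calc a * (a + L * c) ^ 2 ≤ c * ((1 + L) * c) ^ 2 := by gcongr; linarith
      _ ≤ (1 + L) ^ 2 * (a ^ 3 + c ^ 3) := by nlinarith [pow_nonneg ha 3, sq_nonneg (1 + L)]
  · calc a * (a + L * c) ^ 2 ≤ a * ((1 + L) * a) ^ 2 := by gcongr; nlinarith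
      _ ≤ (1 + L) ^ 2 * (a ^ 3 + c ^ 3) := by nlinarith [pow_nonneg hc 3, sq_nonneg (1 + L)]

theorem neg_add_mul_sub_mul_sub_le {a b c d : ℝ} (ha : 0 ≤ a) (hb : 0 ≤ b) (hc : 0 ≤ c)
    (hd : 0 ≤ d) : -((a + b) * ((a - b) * (c - d))) ≤ 4 * (a ^ 3 + b ^ 3 + c ^ 3 + d ^ 3) := by
  nlinarith [mul_nonneg ha hc, mul_nonneg hb hd, mul_nonneg ha hd, mul_nonneg hb hc,
    sq_nonneg (a - b), sq_nonneg (c - d), sq_nonneg (a + b - c - d),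
    mul_nonneg (add_nonneg ha hb) (add_nonneg hc hd)]

theorem exists_le_mul_sqrt_pow {A : ℕ → ℝ} {M K C ρ : ℝ} (hM : 0 ≤ M) (hK : 0 ≤ K) (hC : 0 ≤ C)
    (hρ : 1 ≤ ρ) (hrec : ∀ n, 1 ≤ n → A n ≤ M + √(K * (A (n + 1) + A (n + 2))))
    (hA : ∀ n, 1 ≤ n → A n ≤ C * ρ ^ n) :
    ∃ C', 0 ≤ C' ∧ ∀ n, 1 ≤ n → A n ≤ C' * √ρ ^ n := by
  refine ⟨M + √(2 * K * C) * ρ, by positivity, fun n hn => ?_⟩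
  have hsqrt : 1 ≤ √ρ ^ n := one_le_pow₀ (Real.one_le_sqrt.2 hρ)
  have hsq : (√ρ ^ n) ^ 2 = ρ ^ n := by
    rw [← pow_mul, mul_comm, pow_mul, Real.sq_sqrt (by linarith)]
  have hnext : A (n + 1) + A (n + 2) ≤ 2 * C * ρ ^ 2 * ρ ^ n := by
    have h1 : C * ρ ^ (n + 1) ≤ C * ρ ^ (n + 2) := by gcongr; omega
    linarith [hA (n + 1) (by omega), hA (n + 2) (by omega),
      show C * ρ ^ (n + 2) = C * ρ ^ 2 * ρ ^ n by ring]
  calc A n ≤ M + √(K * (A (n + 1) + A (n + 2))) := hrec n hn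
    _ ≤ M + √((√(2 * K * C) * ρ * √ρ ^ n) ^ 2) := by
        gcongr
        rw [mul_pow, mul_pow, hsq, Real.sq_sqrt (by positivity)]
        nlinarith
    _ = M + √(2 * K * C) * ρ * √ρ ^ n := by rw [Real.sqrt_sq (by positivity)]
    _ ≤ (M + √(2 * K * C) * ρ) * √ρ ^ n := by nlinarith

theorem tendsto_inv_two_pow_mul_of_le_sqrt {A : ℕ → ℝ} {M K C γ : ℝ} (hM : 0 ≤ M) (hK : 0 ≤ K)
    (hC : 0 ≤ C) (hγ : 0 ≤ γ) (hA0 : ∀ n, 0 ≤ A n)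
    (hrec : ∀ n, 1 ≤ n → A n ≤ M + √(K * (A (n + 1) + A (n + 2))))
    (hA : ∀ n, 1 ≤ n → A n ≤ C * ((2 : ℝ) ^ γ) ^ n) :
    Tendsto (fun n => (2 : ℝ)⁻¹ ^ n * A n) atTop (𝓝 0) := by
  have hiter : ∀ j : ℕ, ∃ C, 0 ≤ C ∧ ∀ n, 1 ≤ n → A n ≤ C * ((2 : ℝ) ^ (γ / 2 ^ j)) ^ n := by
    intro j
    induction j with
    | zero => simpa using ⟨C, hC, hA⟩
    | succ j ih =>
      obtain ⟨C, hC, hA⟩ := ih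
      have hsqrt : √((2 : ℝ) ^ (γ / 2 ^ j)) = 2 ^ (γ / 2 ^ (j + 1)) := by
        rw [Real.sqrt_eq_rpow, ← Real.rpow_mul zero_le_two, pow_succ]
        congr 1
        ring
      rw [← hsqrt]
      exact exists_le_mul_sqrt_pow hM hK hC (Real.one_le_rpow one_le_two (by positivity)) hrec hA
  obtain ⟨j, hj⟩ := pow_unbounded_of_one_lt γ one_lt_two
  obtain ⟨C, -, hA⟩ := hiter j
  set ρ := (2 : ℝ) ^ (γ / 2 ^ j)
  have hρ : ρ < 2 := by
    simpa using Real.rpow_lt_rpow_of_exponent_lt one_lt_two ((div_lt_one (by positivity)).2 hj)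
  have hlim : Tendsto (fun n => C * (ρ / 2) ^ n) atTop (𝓝 0) := by
    simpa using (tendsto_pow_atTop_nhds_zero_of_lt_one (by positivity)
      ((div_lt_one two_pos).2 hρ)).const_mul C
  refine squeeze_zero' (Eventually.of_forall fun n => mul_nonneg (by positivity) (hA0 n))
    (eventually_atTop.2 ⟨1, fun n hn => ?_⟩) hlim
  calc (2 : ℝ)⁻¹ ^ n * A n ≤ 2⁻¹ ^ n * (C * ρ ^ n) := by gcongr; exact hA n hn
    _ = C * (ρ / 2) ^ n := by rw [div_pow, inv_pow]; ring

theorem tendsto_inv_two_pow_mul_succ {a : ℕ → ℝ}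
    (h : Tendsto (fun n => (2 : ℝ)⁻¹ ^ n * a n) atTop (𝓝 0)) :
    Tendsto (fun n => (2 : ℝ)⁻¹ ^ n * a (n + 1)) atTop (𝓝 0) := by
  have h2 := (h.comp (tendsto_add_atTop_nat 1)).const_mul 2
  rw [mul_zero] at h2
  exact h2.congr fun n => by simp only [Function.comp_apply, pow_succ]; ring

structure IsDyadicRate (β : ℝ) (k : ℕ → ℝ) : Prop where
  zero_eq : k 0 = 0
  eq_rpow : ∀ n, 1 ≤ n → k n = (2 : ℝ) ^ (β * n)

namespace IsDyadicRate

variable {β : ℝ} {k : ℕ → ℝ}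

theorem nonneg (hk : IsDyadicRate β k) (n : ℕ) : 0 ≤ k n := by
  rcases Nat.eq_zero_or_pos n with rfl | hn
  · exact hk.zero_eq.ge
  · rw [hk.eq_rpow n hn]; positivity

theorem eq_pow (hk : IsDyadicRate β k) {n : ℕ} (hn : 1 ≤ n) : k n = ((2 : ℝ) ^ β) ^ n := by
  rw [hk.eq_rpow n hn, Real.rpow_mul zero_le_two, Real.rpow_natCast]

theorem succ_eq (hk : IsDyadicRate β k) {n : ℕ} (hn : 1 ≤ n) : k (n + 1) = 2 ^ β * k n := by
  rw [hk.eq_pow hn, hk.eq_pow (by omega), pow_succ, mul_comm]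

theorem monotone (hk : IsDyadicRate β k) (hβ : 0 ≤ β) : Monotone k := by
  refine monotone_nat_of_le_succ fun n => ?_
  rcases Nat.eq_zero_or_pos n with rfl | hn
  · rw [hk.zero_eq]; exact hk.nonneg 1
  · rw [hk.succ_eq hn]; exact le_mul_of_one_le_left (hk.nonneg n) (Real.one_le_rpow one_le_two hβ)

end IsDyadicRate

structure IsDyadicSolution (k : ℕ → ℝ) (X : ℕ → ℝ → ℝ) : Prop where
  zero_eq : ∀ t, X 0 t = 0
  hasDerivAt : ∀ n, 1 ≤ n → ∀ t, 0 ≤ t →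
    HasDerivAt (X n) (k (n - 1) * X (n - 1) t ^ 2 - k n * X n t * X (n + 1) t) t

namespace IsDyadicSolution

variable {k : ℕ → ℝ} {X Y : ℕ → ℝ → ℝ}

theorem hasDerivAt_succ (hX : IsDyadicSolution k X) (n : ℕ) {t : ℝ} (ht : 0 ≤ t) :
    HasDerivAt (X (n + 1)) (k n * X n t ^ 2 - k (n + 1) * X (n + 1) t * X (n + 2) t) t := by
  simpa using hX.hasDerivAt (n + 1) (by omega) t ht

theorem continuousOn (hX : IsDyadicSolution k X) (n : ℕ) : ContinuousOn (X n) (Ici 0) := by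
  cases n with
  | zero => simp only [show X 0 = fun _ => 0 from funext hX.zero_eq]; exact continuousOn_const
  | succ n => exact fun t ht => (hX.hasDerivAt_succ n ht).continuousAt.continuousWithinAt

theorem nonneg (hX : IsDyadicSolution k X) (hk : ∀ n, 0 ≤ k n) (h0 : ∀ n, 0 ≤ X n 0) (n : ℕ)
    (t : ℝ) (ht : 0 ≤ t) : 0 ≤ X n t := by
  cases n with
  | zero => rw [hX.zero_eq]
  | succ n =>
    have hc := hX.continuousOn
    refine nonneg_of_neg_mul_le_deriv (a := fun s => k (n + 1) * X (n + 2) s) (by fun_prop)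
      (fun s hs => hX.hasDerivAt_succ n hs) (fun s _ => ?_) (h0 _) ht
    nlinarith [mul_nonneg (hk n) (sq_nonneg (X n s))]

theorem hasDerivAt_energy (hX : IsDyadicSolution k X) (n : ℕ) {t : ℝ} (ht : 0 ≤ t) :
    HasDerivAt (fun s => ∑ m ∈ range (n + 1), X m s ^ 2)
      (-(2 * (k n * X n t ^ 2 * X (n + 1) t))) t := by
  induction n with
  | zero => simpa [hX.zero_eq] using hasDerivAt_const t (0 : ℝ)
  | succ n ih =>
    simp_rw [sum_range_succ _ (n + 1)]
    refine (ih.add ((hX.hasDerivAt_succ n ht).pow 2)).congr_deriv ?_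
    norm_num
    ring

theorem energy_add_flux (hX : IsDyadicSolution k X) (n : ℕ) {T : ℝ} (hT : 0 ≤ T) :
    ∑ m ∈ range (n + 1), X m T ^ 2 + 2 * ∫ s in (0 : ℝ)..T, k n * X n s ^ 2 * X (n + 1) s
      = ∑ m ∈ range (n + 1), X m 0 ^ 2 := by
  have hc := hX.continuousOn
  have hint : IntervalIntegrable (fun s => k n * X n s ^ 2 * X (n + 1) s) volume 0 T :=
    ContinuousOn.intervalIntegrable_of_Ici (by fun_prop) hT
  have hftc := intervalIntegral.integral_eq_sub_of_hasDerivAt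
    (fun t ht => hX.hasDerivAt_energy n (by rw [uIcc_of_le hT] at ht; exact ht.1))
    (hint.const_mul 2).neg
  rw [intervalIntegral.integral_neg, intervalIntegral.integral_const_mul] at hftc
  linarith

theorem sq_le_tsum (hX : IsDyadicSolution k X) (hk : ∀ n, 0 ≤ k n)
    (hXnn : ∀ n t, 0 ≤ t → 0 ≤ X n t) (hsum : Summable fun n => X n 0 ^ 2) (n : ℕ) {t : ℝ}
    (ht : 0 ≤ t) : X n t ^ 2 ≤ ∑' m, X m 0 ^ 2 := by
  have hflux : 0 ≤ ∫ s in (0 : ℝ)..t, k n * X n s ^ 2 * X (n + 1) s :=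
    intervalIntegral.integral_nonneg ht fun s hs =>
      mul_nonneg (mul_nonneg (hk n) (sq_nonneg _)) (hXnn _ _ hs.1)
  calc X n t ^ 2 ≤ ∑ m ∈ range (n + 1), X m t ^ 2 :=
        single_le_sum (f := fun m => X m t ^ 2) (fun m _ => sq_nonneg _) (self_mem_range_succ n)
    _ ≤ ∑ m ∈ range (n + 1), X m 0 ^ 2 := by linarith [hX.energy_add_flux n ht]
    _ ≤ ∑' m, X m 0 ^ 2 := hsum.sum_le_tsum _ fun m _ => sq_nonneg _

theorem integral_flux_le (hX : IsDyadicSolution k X) (hsum : Summable fun n => X n 0 ^ 2) (n : ℕ)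
    {T : ℝ} (hT : 0 ≤ T) :
    ∫ s in (0 : ℝ)..T, k n * X n s ^ 2 * X (n + 1) s ≤ (∑' m, X m 0 ^ 2) / 2 := by
  have hE := hX.energy_add_flux n hT
  have hET : 0 ≤ ∑ m ∈ range (n + 1), X m T ^ 2 := sum_nonneg fun m _ => sq_nonneg _
  have hE0 := hsum.sum_le_tsum (range (n + 1)) fun m _ => sq_nonneg _
  linarith

theorem integral_cube_le_mul (hX : IsDyadicSolution k X) (hk : ∀ n, 0 ≤ k n)
    (hXnn : ∀ n t, 0 ≤ t → 0 ≤ X n t) (hsum : Summable fun n => X n 0 ^ 2) (n : ℕ) {T : ℝ}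
    (hT : 0 ≤ T) : ∫ s in (0 : ℝ)..T, k n * X n s ^ 3 ≤ T * √(∑' m, X m 0 ^ 2) ^ 3 * k n := by
  have hc := hX.continuousOn
  have hle : ∀ s ∈ Icc 0 T, k n * X n s ^ 3 ≤ k n * √(∑' m, X m 0 ^ 2) ^ 3 := fun s hs =>
    mul_le_mul_of_nonneg_left (pow_le_pow_left₀ (hXnn n s hs.1)
      (Real.le_sqrt_of_sq_le (hX.sq_le_tsum hk hXnn hsum n hs.1)) 3) (hk n)
  calc ∫ s in (0 : ℝ)..T, k n * X n s ^ 3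
      ≤ ∫ s in (0 : ℝ)..T, k n * √(∑' m, X m 0 ^ 2) ^ 3 :=
        intervalIntegral.integral_mono_on hT
          (ContinuousOn.intervalIntegrable_of_Ici (by fun_prop) hT) intervalIntegrable_const hle
    _ = T * √(∑' m, X m 0 ^ 2) ^ 3 * k n := by
        rw [intervalIntegral.integral_const, sub_zero, smul_eq_mul]; ring

theorem integral_cube_le (hX : IsDyadicSolution k X) (hk : ∀ n, 0 ≤ k n)
    (hXnn : ∀ n t, 0 ≤ t → 0 ≤ X n t) (hsum : Summable fun n => X n 0 ^ 2) {L : ℝ} {n : ℕ}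
    (hn : 1 ≤ n) (hL : k (n + 1) ≤ L * k n) {T : ℝ} (hT : 0 ≤ T) :
    ∫ s in (0 : ℝ)..T, k n * X n s ^ 3 ≤ ∑' m, X m 0 ^ 2
      + ∫ s in (0 : ℝ)..T, X n s * (k n * X (n + 1) s) * (X (n + 1) s + L * X (n + 2) s) := by
  have hc := hX.continuousOn
  obtain ⟨n, rfl⟩ : ∃ m, n = m + 1 := ⟨n - 1, by omega⟩
  have hderiv : ∀ t, 0 ≤ t → HasDerivAt (fun s => X (n + 1) s * X (n + 2) s)
      ((k n * X n t ^ 2 - k (n + 1) * X (n + 1) t * X (n + 2) t) * X (n + 2) t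
        + X (n + 1) t * (k (n + 1) * X (n + 1) t ^ 2 - k (n + 2) * X (n + 2) t * X (n + 3) t)) t :=
    fun t ht => (hX.hasDerivAt_succ n ht).mul (hX.hasDerivAt_succ (n + 1) ht)
  have hkey := intervalIntegral.integral_le_sub_of_hasDeriv_right_of_le hT
    (fun t ht => (hderiv t ht.1).continuousAt.continuousWithinAt)
    (fun t ht => (hderiv t ht.1.le).hasDerivWithinAt)
    ((show ContinuousOn (fun s => k (n + 1) * X (n + 1) s ^ 3 - X (n + 1) s * (k (n + 1) *
      X (n + 2) s) * (X (n + 2) s + L * X (n + 3) s)) (Ici 0) by fun_prop).mono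
        Icc_subset_Ici_self).integrableOn_Icc
    (fun t ht => by
      have hflux : 0 ≤ k n * X n t ^ 2 * X (n + 2) t :=
        mul_nonneg (mul_nonneg (hk n) (sq_nonneg _)) (hXnn _ _ ht.1.le)
      have htriple := mul_le_mul_of_nonneg_right hL (mul_nonneg (mul_nonneg (hXnn (n + 1) t
        ht.1.le) (hXnn (n + 2) t ht.1.le)) (hXnn (n + 3) t ht.1.le))
      nlinarith)
  rw [intervalIntegral.integral_sub (ContinuousOn.intervalIntegrable_of_Ici (by fun_prop) hT)
    (ContinuousOn.intervalIntegrable_of_Ici (by fun_prop) hT)] at hkey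
  have hend : X (n + 1) T * X (n + 2) T ≤ ∑' m, X m 0 ^ 2 := by
    nlinarith [hX.sq_le_tsum hk hXnn hsum (n + 1) hT, hX.sq_le_tsum hk hXnn hsum (n + 2) hT,
      sq_nonneg (X (n + 1) T - X (n + 2) T)]
  have hstart : 0 ≤ X (n + 1) 0 * X (n + 2) 0 := mul_nonneg (hXnn _ _ le_rfl) (hXnn _ _ le_rfl)
  linarith

theorem integral_mul_add_mul_sq_le (hX : IsDyadicSolution k X) (hk : ∀ n, 0 ≤ k n)
    (hmono : Monotone k) (hXnn : ∀ n t, 0 ≤ t → 0 ≤ X n t) {L : ℝ} (hL0 : 0 ≤ L) (n : ℕ) {T : ℝ}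
    (hT : 0 ≤ T) :
    ∫ s in (0 : ℝ)..T, k n * X (n + 1) s * (X (n + 1) s + L * X (n + 2) s) ^ 2
      ≤ (1 + L) ^ 2 * ((∫ s in (0 : ℝ)..T, k (n + 1) * X (n + 1) s ^ 3)
        + ∫ s in (0 : ℝ)..T, k (n + 2) * X (n + 2) s ^ 3) := by
  have hc := hX.continuousOn
  have hi : ∀ {f : ℝ → ℝ}, ContinuousOn f (Ici 0) → IntervalIntegrable f volume 0 T :=
    fun hf => hf.intervalIntegrable_of_Ici hT
  rw [← intervalIntegral.integral_add (hi (by fun_prop)) (hi (by fun_prop)),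
    ← intervalIntegral.integral_const_mul]
  refine intervalIntegral.integral_mono_on hT (hi (by fun_prop)) (hi (by fun_prop)) fun s hs => ?_
  have hk1 := mul_le_mul_of_nonneg_right (hmono n.le_succ) (pow_nonneg (hXnn (n + 1) s hs.1) 3)
  have hk2 := mul_le_mul_of_nonneg_right (hmono (show n ≤ n + 2 by omega))
    (pow_nonneg (hXnn (n + 2) s hs.1) 3)
  calc k n * X (n + 1) s * (X (n + 1) s + L * X (n + 2) s) ^ 2
      = k n * (X (n + 1) s * (X (n + 1) s + L * X (n + 2) s) ^ 2) := by ring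
    _ ≤ k n * ((1 + L) ^ 2 * (X (n + 1) s ^ 3 + X (n + 2) s ^ 3)) :=
      mul_le_mul_of_nonneg_left (mul_add_mul_sq_le (hXnn _ s hs.1) (hXnn _ s hs.1) hL0) (hk n)
    _ ≤ _ := by nlinarith [sq_nonneg (1 + L)]

theorem integral_cube_le_sqrt (hX : IsDyadicSolution k X) (hk : ∀ n, 0 ≤ k n) (hmono : Monotone k)
    (hXnn : ∀ n t, 0 ≤ t → 0 ≤ X n t) (hsum : Summable fun n => X n 0 ^ 2) {L : ℝ} (hL0 : 0 ≤ L)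
    {n : ℕ} (hn : 1 ≤ n) (hL : k (n + 1) ≤ L * k n) {T : ℝ} (hT : 0 ≤ T) :
    ∫ s in (0 : ℝ)..T, k n * X n s ^ 3 ≤ ∑' m, X m 0 ^ 2 + √((∑' m, X m 0 ^ 2) / 2 * (1 + L) ^ 2 *
      ((∫ s in (0 : ℝ)..T, k (n + 1) * X (n + 1) s ^ 3)
        + ∫ s in (0 : ℝ)..T, k (n + 2) * X (n + 2) s ^ 3)) := by
  have hc := hX.continuousOn
  have hi : ∀ {f : ℝ → ℝ}, ContinuousOn f (Ici 0) → IntervalIntegrable f volume 0 T :=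
    fun hf => hf.intervalIntegrable_of_Ici hT
  refine (hX.integral_cube_le hk hXnn hsum hn hL hT).trans ?_
  gcongr
  refine (le_abs_self _).trans (Real.abs_le_sqrt ?_)
  have hCS : (∫ s in (0 : ℝ)..T, X n s * (k n * X (n + 1) s) * (X (n + 1) s + L * X (n + 2) s)) ^ 2
      ≤ (∫ s in (0 : ℝ)..T, X n s ^ 2 * (k n * X (n + 1) s))
        * ∫ s in (0 : ℝ)..T, k n * X (n + 1) s * (X (n + 1) s + L * X (n + 2) s) ^ 2 := by
    simp only [intervalIntegral.integral_of_le hT]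
    exact sq_integral_mul_mul_le (ae_restrict_of_forall_mem measurableSet_Ioc fun s hs =>
      mul_nonneg (hk n) (hXnn _ _ hs.1.le)) (hi (by fun_prop)).1 (hi (by fun_prop)).1
      (hi (by fun_prop)).1
  have hflux : ∫ s in (0 : ℝ)..T, X n s ^ 2 * (k n * X (n + 1) s) ≤ (∑' m, X m 0 ^ 2) / 2 :=
    calc _ = ∫ s in (0 : ℝ)..T, k n * X n s ^ 2 * X (n + 1) s := by congr 1; ext s; ring
      _ ≤ _ := hX.integral_flux_le hsum n hT
  have hcube := hX.integral_mul_add_mul_sq_le hk hmono hXnn hL0 n hT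
  have hM : 0 ≤ ∑' m, X m 0 ^ 2 := tsum_nonneg fun m => sq_nonneg _
  have hnonneg : 0 ≤ ∫ s in (0 : ℝ)..T, k n * X (n + 1) s * (X (n + 1) s + L * X (n + 2) s) ^ 2 :=
    intervalIntegral.integral_nonneg hT fun s hs =>
      mul_nonneg (mul_nonneg (hk n) (hXnn _ s hs.1)) (sq_nonneg _)
  calc _ ≤ _ := hCS
    _ ≤ (∑' m, X m 0 ^ 2) / 2 * ((1 + L) ^ 2 * ((∫ s in (0 : ℝ)..T, k (n + 1) * X (n + 1) s ^ 3)
        + ∫ s in (0 : ℝ)..T, k (n + 2) * X (n + 2) s ^ 3)) :=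
      mul_le_mul hflux hcube hnonneg (by positivity)
    _ = _ := by ring

theorem tendsto_inv_two_pow_mul_integral_cube (hX : IsDyadicSolution k X) {β : ℝ} (hβ : 0 ≤ β)
    (hk : IsDyadicRate β k) (h0 : ∀ n, 0 ≤ X n 0) (hsum : Summable fun n => X n 0 ^ 2) {T : ℝ}
    (hT : 0 ≤ T) :
    Tendsto (fun n => (2 : ℝ)⁻¹ ^ n * ∫ s in (0 : ℝ)..T, k n * X n s ^ 3) atTop (𝓝 0) := by
  have hXnn := hX.nonneg hk.nonneg h0
  have hM : 0 ≤ ∑' m, X m 0 ^ 2 := tsum_nonneg fun m => sq_nonneg _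
  refine tendsto_inv_two_pow_mul_of_le_sqrt hM (K := (∑' m, X m 0 ^ 2) / 2 * (1 + 2 ^ β) ^ 2)
    (C := T * √(∑' m, X m 0 ^ 2) ^ 3) (by positivity) (by positivity) hβ
    (fun n => intervalIntegral.integral_nonneg hT fun s hs =>
      mul_nonneg (hk.nonneg n) (pow_nonneg (hXnn n s hs.1) 3))
    (fun n hn => hX.integral_cube_le_sqrt hk.nonneg (hk.monotone hβ) hXnn hsum (by positivity) hn
      (hk.succ_eq hn).le hT) (fun n hn => ?_)
  rw [← hk.eq_pow hn]
  exact hX.integral_cube_le_mul hk.nonneg hXnn hsum n hT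

theorem hasDerivAt_weighted_sq_sub (hX : IsDyadicSolution k X) (hY : IsDyadicSolution k Y) (N : ℕ)
    {t : ℝ} (ht : 0 ≤ t) :
    HasDerivAt (fun s => ∑ m ∈ range (N + 1), (2 : ℝ)⁻¹ ^ m * (X m s - Y m s) ^ 2)
      (-((2 : ℝ)⁻¹ ^ N *
          (k N * ((X N t + Y N t) * ((X N t - Y N t) * (X (N + 1) t - Y (N + 1) t)))))
        - ∑ m ∈ range (N + 1),
          (2 : ℝ)⁻¹ ^ m * (k m * ((X (m + 1) t + Y (m + 1) t) * (X m t - Y m t) ^ 2))) t := by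
  induction N with
  | zero => simpa [hX.zero_eq, hY.zero_eq] using hasDerivAt_const t (0 : ℝ)
  | succ N ih =>
    simp_rw [sum_range_succ _ (N + 1)]
    refine (ih.add ((((hX.hasDerivAt_succ N ht).sub (hY.hasDerivAt_succ N ht)).pow 2).const_mul
      ((2 : ℝ)⁻¹ ^ (N + 1)))).congr_deriv ?_
    norm_num [pow_succ]
    ring

theorem weighted_sq_sub_le (hX : IsDyadicSolution k X) (hY : IsDyadicSolution k Y)
    (hk : ∀ n, 0 ≤ k n) (hmono : Monotone k) (hXnn : ∀ n t, 0 ≤ t → 0 ≤ X n t)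
    (hYnn : ∀ n t, 0 ≤ t → 0 ≤ Y n t) (h0 : ∀ n, X n 0 = Y n 0) (N : ℕ) {T : ℝ} (hT : 0 ≤ T) :
    ∑ m ∈ range (N + 1), (2 : ℝ)⁻¹ ^ m * (X m T - Y m T) ^ 2 ≤ 4 * (2 : ℝ)⁻¹ ^ N *
      (((∫ s in (0 : ℝ)..T, k N * X N s ^ 3) + ∫ s in (0 : ℝ)..T, k N * Y N s ^ 3)
        + ((∫ s in (0 : ℝ)..T, k (N + 1) * X (N + 1) s ^ 3)
          + ∫ s in (0 : ℝ)..T, k (N + 1) * Y (N + 1) s ^ 3)) := by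
  have hcX := hX.continuousOn
  have hcY := hY.continuousOn
  have hi : ∀ {f : ℝ → ℝ}, ContinuousOn f (Ici 0) → IntervalIntegrable f volume 0 T :=
    fun hf => hf.intervalIntegrable_of_Ici hT
  have hderiv := fun t (ht : 0 ≤ t) => hX.hasDerivAt_weighted_sq_sub hY N ht
  have hkey := intervalIntegral.sub_le_integral_of_hasDeriv_right_of_le hT
    (fun t ht => (hderiv t ht.1).continuousAt.continuousWithinAt)
    (fun t ht => (hderiv t ht.1.le).hasDerivWithinAt)
    ((show ContinuousOn (fun s => 4 * (2 : ℝ)⁻¹ ^ N * ((k N * X N s ^ 3 + k N * Y N s ^ 3)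
      + (k (N + 1) * X (N + 1) s ^ 3 + k (N + 1) * Y (N + 1) s ^ 3))) (Ici 0) by fun_prop).mono
        Icc_subset_Ici_self).integrableOn_Icc
    (fun t ht => by
      have hXt := fun m => hXnn m t ht.1.le
      have hYt := fun m => hYnn m t ht.1.le
      have hS : 0 ≤ ∑ m ∈ range (N + 1),
          (2 : ℝ)⁻¹ ^ m * (k m * ((X (m + 1) t + Y (m + 1) t) * (X m t - Y m t) ^ 2)) :=
        sum_nonneg fun m _ => mul_nonneg (by positivity)
          (mul_nonneg (hk m) (mul_nonneg (add_nonneg (hXt _) (hYt _)) (sq_nonneg _)))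
      have hw : (0 : ℝ) ≤ (2 : ℝ)⁻¹ ^ N := by positivity
      have hX1 := mul_le_mul_of_nonneg_right (hmono N.le_succ) (pow_nonneg (hXt (N + 1)) 3)
      have hY1 := mul_le_mul_of_nonneg_right (hmono N.le_succ) (pow_nonneg (hYt (N + 1)) 3)
      nlinarith [mul_le_mul_of_nonneg_left (neg_add_mul_sub_mul_sub_le (hXt N) (hYt N)
        (hXt (N + 1)) (hYt (N + 1))) (mul_nonneg hw (hk N)), mul_le_mul_of_nonneg_left hX1 hw,
        mul_le_mul_of_nonneg_left hY1 hw])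
  rw [intervalIntegral.integral_const_mul, intervalIntegral.integral_add (hi (by fun_prop))
    (hi (by fun_prop)), intervalIntegral.integral_add (hi (by fun_prop)) (hi (by fun_prop)),
    intervalIntegral.integral_add (hi (by fun_prop)) (hi (by fun_prop))] at hkey
  simpa [h0] using hkey

theorem unique (hX : IsDyadicSolution k X) (hY : IsDyadicSolution k Y) {β : ℝ}
    (hβ : 0 ≤ β) (hk : IsDyadicRate β k) (h0 : ∀ n, 0 ≤ X n 0)
    (hsum : Summable fun n => X n 0 ^ 2) (hXY : ∀ n, X n 0 = Y n 0) (n : ℕ) {t : ℝ}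
    (ht : 0 ≤ t) : X n t = Y n t := by
  have hXlim := hX.tendsto_inv_two_pow_mul_integral_cube hβ hk h0 hsum ht
  have hYlim := hY.tendsto_inv_two_pow_mul_integral_cube hβ hk (fun m => hXY m ▸ h0 m)
    (by simpa only [hXY] using hsum) ht
  have hlim := ((hXlim.add hYlim).add ((tendsto_inv_two_pow_mul_succ hXlim).add
    (tendsto_inv_two_pow_mul_succ hYlim))).const_mul 4
  rw [show (4 : ℝ) * (0 + 0 + (0 + 0)) = 0 by norm_num] at hlim
  have hsq : (2 : ℝ)⁻¹ ^ n * (X n t - Y n t) ^ 2 ≤ 0 := by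
    refine ge_of_tendsto hlim (eventually_atTop.2 ⟨n, fun N hN => ?_⟩)
    calc (2 : ℝ)⁻¹ ^ n * (X n t - Y n t) ^ 2
        ≤ ∑ m ∈ range (N + 1), (2 : ℝ)⁻¹ ^ m * (X m t - Y m t) ^ 2 :=
          single_le_sum (f := fun m => (2 : ℝ)⁻¹ ^ m * (X m t - Y m t) ^ 2)
            (fun m _ => by positivity) (mem_range.2 (by omega))
      _ ≤ _ := hX.weighted_sq_sub_le hY hk.nonneg (hk.monotone hβ) (hX.nonneg hk.nonneg h0)
          (hY.nonneg hk.nonneg fun m => hXY m ▸ h0 m) hXY N ht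
      _ = _ := by ring
  have hzero : (X n t - Y n t) ^ 2 = 0 :=
    le_antisymm (nonpos_of_mul_nonpos_right hsq (by positivity)) (sq_nonneg _)
  exact sub_eq_zero.1 (pow_eq_zero_iff two_ne_zero |>.1 hzero)

end IsDyadicSolution

theorem dyadic_uniqueness_general
    (β : ℝ) (hβ : 0 < β) (k : ℕ → ℝ)
    (hk0 : k 0 = 0) (hk : ∀ n : ℕ, 1 ≤ n → k n = (2:ℝ) ^ (β * (n:ℝ)))
    (x : ℕ → ℝ) (hxnn : ∀ n : ℕ, 0 ≤ x n)
    (hxl2 : Summable (fun n : ℕ => (x n) ^ 2))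
    (X Y : ℕ → ℝ → ℝ)
    (hX0 : ∀ t : ℝ, X 0 t = 0) (hY0 : ∀ t : ℝ, Y 0 t = 0)
    (hXinit : ∀ n : ℕ, X n 0 = x n) (hYinit : ∀ n : ℕ, Y n 0 = x n)
    (hXsol : ∀ n : ℕ, 1 ≤ n → ∀ t : ℝ, 0 ≤ t →
      HasDerivAt (X n)
        (k (n-1) * (X (n-1) t) ^ 2 - k n * X n t * X (n+1) t) t)
    (hYsol : ∀ n : ℕ, 1 ≤ n → ∀ t : ℝ, 0 ≤ t →
      HasDerivAt (Y n)
        (k (n-1) * (Y (n-1) t) ^ 2 - k n * Y n t * Y (n+1) t) t) :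
    ∀ n : ℕ, ∀ t : ℝ, 0 ≤ t → X n t = Y n t :=
  fun _ _ ht => IsDyadicSolution.unique ⟨hX0, hXsol⟩ ⟨hY0, hYsol⟩ hβ.le ⟨hk0, hk⟩
    (fun n => hXinit n ▸ hxnn n) (by simpa only [hXinit] using hxl2)
    (fun n => (hXinit n).trans (hYinit n).symm) _ ht

/-- Uniqueness for the dyadic model with non-negative ℓ² initial condition:
any two weak solutions with the same data coincide for all `t ≥ 0`. -/
theorem dyadic_uniqueness
    (β : ℝ) (hβ : 0 < β) (k : ℕ → ℝ)
    (hk0 : k 0 = 0) (hk : ∀ n : ℕ, 1 ≤ n → k n = (2:ℝ) ^ (β * (n:ℝ)))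
    (x : ℕ → ℝ) (hx0 : x 0 = 0) (hxnn : ∀ n : ℕ, 0 ≤ x n)
    (hxl2 : Summable (fun n : ℕ => (x n) ^ 2))
    (X Y : ℕ → ℝ → ℝ)
    (hX0 : ∀ t : ℝ, X 0 t = 0) (hY0 : ∀ t : ℝ, Y 0 t = 0)
    (hXinit : ∀ n : ℕ, X n 0 = x n) (hYinit : ∀ n : ℕ, Y n 0 = x n)
    (hXsol : ∀ n : ℕ, 1 ≤ n → ∀ t : ℝ, 0 ≤ t →
      HasDerivAt (X n)
        (k (n-1) * (X (n-1) t) ^ 2 - k n * X n t * X (n+1) t) t)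
    (hYsol : ∀ n : ℕ, 1 ≤ n → ∀ t : ℝ, 0 ≤ t →
      HasDerivAt (Y n)
        (k (n-1) * (Y (n-1) t) ^ 2 - k n * Y n t * Y (n+1) t) t) :
    ∀ n : ℕ, ∀ t : ℝ, 0 ≤ t → X n t = Y n t :=
  dyadic_uniqueness_general β hβ k hk0 hk x hxnn hxl2 X Y hX0 hY0 hXinit hYinit hXsol hYsol
end

section
/- Let X and Y be two weak solutions of the dyadic model with the same non-negative ℓ² initial condition x, and set Z_n := Y_n - X_n, W_n := Y_n + X_n. Then Z satisfies Z_n' = k_{n-1} Z_{n-1} W_{n-1} - (k_n/2)(Z_n W_{n+1} + W_n Z_{n+1}) with Z_n(0) = 0, and for ψ_N(t) := Σ_{n=1}^N Z_n(t)²/2^n one has ψ_N'(t) ≤ 2^{-N} k_N (Y_N(t)³ + X_{N+1}(t)³ + X_N(t)³ + Y_{N+1}(t)³) for all t ≥ 0. -/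
/-!
Subtracting the two dyadic systems gives a system for `Z = Y - X` that is linear in `Z` with
coefficients `W = Y + X ≥ 0`. In `ψ_N'` the transfer terms `k_n Z_n W_n Z_{n+1} / 2ⁿ` telescope
(the weight `2⁻ⁿ` is chosen exactly for this), the remaining terms `-k_n Z_n² W_{n+1} / 2ⁿ` are
non-positive, and only the boundary flux at `N` survives; it is controlled by
`y²x' ≤ y³ + x'³` for non-negative reals.
-/

open Finset

def dyadicDrift (k x : ℕ → ℝ) (n : ℕ) : ℝ :=
  k (n - 1) * x (n - 1) ^ 2 - k n * x n * x (n + 1)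

noncomputable def linearizedDrift (k z w : ℕ → ℝ) (n : ℕ) : ℝ :=
  k (n - 1) * z (n - 1) * w (n - 1) - k n / 2 * (z n * w (n + 1) + w n * z (n + 1))

theorem dyadicDrift_sub (k x y : ℕ → ℝ) (n : ℕ) :
    dyadicDrift k y n - dyadicDrift k x n = linearizedDrift k (y - x) (y + x) n := by
  simp only [dyadicDrift, linearizedDrift, Pi.sub_apply, Pi.add_apply]
  ring

theorem HasDerivAt.sub_dyadic {k : ℕ → ℝ} {X Y : ℕ → ℝ → ℝ} {n : ℕ} {t : ℝ}
    (hX : HasDerivAt (X n) (dyadicDrift k (X · t) n) t)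
    (hY : HasDerivAt (Y n) (dyadicDrift k (Y · t) n) t) :
    HasDerivAt (fun s ↦ Y n s - X n s)
      (linearizedDrift k (fun m ↦ Y m t - X m t) (fun m ↦ Y m t + X m t) n) t :=
  (hY.sub hX).congr_deriv (dyadicDrift_sub k _ _ n)

theorem hasDerivAt_sum_sq_div_two_pow {f : ℕ → ℝ → ℝ} {f' : ℕ → ℝ} {t : ℝ} (N : ℕ)
    (hf : ∀ n ∈ Icc 1 N, HasDerivAt (f n) (f' n) t) :
    HasDerivAt (fun s ↦ ∑ n ∈ Icc 1 N, f n s ^ 2 / 2 ^ n)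
      (∑ n ∈ Icc 1 N, 2 * f n t * f' n / 2 ^ n) t := by
  refine HasDerivAt.fun_sum fun n hn ↦ ?_
  refine (((hf n hn).pow 2).div_const _).congr_deriv ?_
  push_cast
  ring

theorem sum_mul_linearizedDrift_div_two_pow (k z w : ℕ → ℝ) (N : ℕ) :
    ∑ n ∈ Icc 1 N, 2 * z n * linearizedDrift k z w n / 2 ^ n =
      k 0 * z 0 * w 0 * z 1 - k N * z N * w N * z (N + 1) / 2 ^ N
        - ∑ n ∈ Icc 1 N, k n * z n ^ 2 * w (n + 1) / 2 ^ n := by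
  induction N with
  | zero => simp
  | succ N ih =>
    rw [sum_Icc_succ_top (Nat.le_add_left 1 N), sum_Icc_succ_top (Nat.le_add_left 1 N), ih]
    simp only [linearizedDrift, Nat.add_sub_cancel, pow_succ]
    ring

theorem sum_mul_linearizedDrift_div_two_pow_le {k z w : ℕ → ℝ} (hk0 : k 0 = 0)
    (hk : ∀ n, 0 ≤ k n) (hw : ∀ n, 0 ≤ w n) (N : ℕ) :
    ∑ n ∈ Icc 1 N, 2 * z n * linearizedDrift k z w n / 2 ^ n ≤
      k N / 2 ^ N * -(z N * w N * z (N + 1)) := by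
  have hdiss : 0 ≤ ∑ n ∈ Icc 1 N, k n * z n ^ 2 * w (n + 1) / 2 ^ n :=
    sum_nonneg fun n _ ↦ by have := hk n; have := hw (n + 1); positivity
  rw [sum_mul_linearizedDrift_div_two_pow, hk0]
  linarith [show k N / 2 ^ N * -(z N * w N * z (N + 1)) = -(k N * z N * w N * z (N + 1) / 2 ^ N)
    by ring]

theorem neg_boundary_flux_le {x x' y y' : ℝ} (hx : 0 ≤ x) (hx' : 0 ≤ x') (hy : 0 ≤ y)
    (hy' : 0 ≤ y') : -((y - x) * (y + x) * (y' - x')) ≤ y ^ 3 + x' ^ 3 + x ^ 3 + y' ^ 3 := by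
  have h₁ : y ^ 2 * x' ≤ y ^ 3 + x' ^ 3 := by nlinarith [sq_nonneg (y - x'), mul_nonneg hy hx']
  have h₂ : x ^ 2 * y' ≤ x ^ 3 + y' ^ 3 := by nlinarith [sq_nonneg (x - y'), mul_nonneg hx hy']
  nlinarith [mul_nonneg (sq_nonneg y) hy', mul_nonneg (sq_nonneg x) hx']

theorem dyadic_difference_energy_estimate_general
    (β : ℝ) (k : ℕ → ℝ)
    (hk0 : k 0 = 0) (hk : ∀ n : ℕ, 1 ≤ n → k n = (2:ℝ) ^ (β * (n:ℝ)))
    (x : ℕ → ℝ)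
    (X Y : ℕ → ℝ → ℝ)
    (hXinit : ∀ n : ℕ, X n 0 = x n) (hYinit : ∀ n : ℕ, Y n 0 = x n)
    (hXsol : ∀ n : ℕ, 1 ≤ n → ∀ t : ℝ, 0 ≤ t →
      HasDerivAt (X n)
        (k (n-1) * (X (n-1) t) ^ 2 - k n * X n t * X (n+1) t) t)
    (hYsol : ∀ n : ℕ, 1 ≤ n → ∀ t : ℝ, 0 ≤ t →
      HasDerivAt (Y n)
        (k (n-1) * (Y (n-1) t) ^ 2 - k n * Y n t * Y (n+1) t) t)
    (hXnn : ∀ n : ℕ, ∀ t : ℝ, 0 ≤ t → 0 ≤ X n t)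
    (hYnn : ∀ n : ℕ, ∀ t : ℝ, 0 ≤ t → 0 ≤ Y n t)
    (Z W : ℕ → ℝ → ℝ)
    (hZ : ∀ n : ℕ, ∀ t : ℝ, Z n t = Y n t - X n t)
    (hW : ∀ n : ℕ, ∀ t : ℝ, W n t = Y n t + X n t) :
    (∀ n : ℕ, 1 ≤ n → Z n 0 = 0) ∧
    (∀ n : ℕ, 1 ≤ n → ∀ t : ℝ, 0 ≤ t →
      HasDerivAt (Z n)
        (k (n-1) * Z (n-1) t * W (n-1) t
          - k n / 2 * (Z n t * W (n+1) t + W n t * Z (n+1) t)) t) ∧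
    (∀ N : ℕ, 1 ≤ N → ∀ t : ℝ, 0 ≤ t →
      ∃ d : ℝ,
        HasDerivAt (fun s : ℝ => ∑ n ∈ Finset.Icc 1 N, (Z n s) ^ 2 / 2 ^ n) d t ∧
        d ≤ 2 ^ (-(N:ℤ)) * k N
              * ((Y N t) ^ 3 + (X (N+1) t) ^ 3 + (X N t) ^ 3 + (Y (N+1) t) ^ 3)) := by
  obtain rfl : Z = fun n s ↦ Y n s - X n s := funext₂ hZ
  obtain rfl : W = fun n s ↦ Y n s + X n s := funext₂ hW
  have hk_nonneg (n : ℕ) : 0 ≤ k n := by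
    rcases Nat.eq_zero_or_pos n with rfl | hn
    · exact hk0.ge
    · rw [hk n hn]; positivity
  have hZsol (n : ℕ) (hn : 1 ≤ n) (t : ℝ) (ht : 0 ≤ t) :=
    HasDerivAt.sub_dyadic (hXsol n hn t ht) (hYsol n hn t ht)
  refine ⟨fun n _ ↦ by simp [hXinit, hYinit], hZsol, fun N _ t ht ↦ ⟨_,
    hasDerivAt_sum_sq_div_two_pow N fun n hn ↦ hZsol n (mem_Icc.mp hn).1 t ht, ?_⟩⟩
  calc _ ≤ k N / 2 ^ N * -((Y N t - X N t) * (Y N t + X N t) * (Y (N + 1) t - X (N + 1) t)) :=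
        sum_mul_linearizedDrift_div_two_pow_le hk0 hk_nonneg
          (fun n ↦ add_nonneg (hYnn n t ht) (hXnn n t ht)) N
    _ ≤ k N / 2 ^ N * (Y N t ^ 3 + X (N + 1) t ^ 3 + X N t ^ 3 + Y (N + 1) t ^ 3) := by
        gcongr
        · have := hk_nonneg N; positivity
        · exact neg_boundary_flux_le (hXnn N t ht) (hXnn _ t ht) (hYnn N t ht) (hYnn _ t ht)
    _ = _ := by rw [zpow_neg, zpow_natCast]; ring

/-- For two non-negative weak solutions `X`, `Y` with the same data, the
difference `Z = Y - X` solves the linearized system, and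
`ψ_N(t) = ∑_{n=1}^N Z_n(t)²/2ⁿ` has derivative bounded by
`2^{-N} k_N (Y_N³ + X_{N+1}³ + X_N³ + Y_{N+1}³)`. -/
theorem dyadic_difference_energy_estimate
    (β : ℝ) (hβ : 0 < β) (k : ℕ → ℝ)
    (hk0 : k 0 = 0) (hk : ∀ n : ℕ, 1 ≤ n → k n = (2:ℝ) ^ (β * (n:ℝ)))
    (x : ℕ → ℝ) (hx0 : x 0 = 0) (hxnn : ∀ n : ℕ, 0 ≤ x n)
    (hxl2 : Summable (fun n : ℕ => (x n) ^ 2))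
    (X Y : ℕ → ℝ → ℝ)
    (hX0 : ∀ t : ℝ, X 0 t = 0) (hY0 : ∀ t : ℝ, Y 0 t = 0)
    (hXinit : ∀ n : ℕ, X n 0 = x n) (hYinit : ∀ n : ℕ, Y n 0 = x n)
    (hXsol : ∀ n : ℕ, 1 ≤ n → ∀ t : ℝ, 0 ≤ t →
      HasDerivAt (X n)
        (k (n-1) * (X (n-1) t) ^ 2 - k n * X n t * X (n+1) t) t)
    (hYsol : ∀ n : ℕ, 1 ≤ n → ∀ t : ℝ, 0 ≤ t →
      HasDerivAt (Y n)
        (k (n-1) * (Y (n-1) t) ^ 2 - k n * Y n t * Y (n+1) t) t)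
    (hXnn : ∀ n : ℕ, ∀ t : ℝ, 0 ≤ t → 0 ≤ X n t)
    (hYnn : ∀ n : ℕ, ∀ t : ℝ, 0 ≤ t → 0 ≤ Y n t)
    (Z W : ℕ → ℝ → ℝ)
    (hZ : ∀ n : ℕ, ∀ t : ℝ, Z n t = Y n t - X n t)
    (hW : ∀ n : ℕ, ∀ t : ℝ, W n t = Y n t + X n t) :
    (∀ n : ℕ, 1 ≤ n → Z n 0 = 0) ∧
    (∀ n : ℕ, 1 ≤ n → ∀ t : ℝ, 0 ≤ t →
      HasDerivAt (Z n)
        (k (n-1) * Z (n-1) t * W (n-1) t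
          - k n / 2 * (Z n t * W (n+1) t + W n t * Z (n+1) t)) t) ∧
    (∀ N : ℕ, 1 ≤ N → ∀ t : ℝ, 0 ≤ t →
      ∃ d : ℝ,
        HasDerivAt (fun s : ℝ => ∑ n ∈ Finset.Icc 1 N, (Z n s) ^ 2 / 2 ^ n) d t ∧
        d ≤ 2 ^ (-(N:ℤ)) * k N
              * ((Y N t) ^ 3 + (X (N+1) t) ^ 3 + (X N t) ^ 3 + (Y (N+1) t) ^ 3)) :=
  dyadic_difference_energy_estimate_general β k hk0 hk x X Y hXinit hYinit hXsol hYsol hXnn hYnn Z W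
    hZ hW
end

section
/- (Invariant region for the truncated rescaled system) Let β ≥ 1, N ≥ 1, and let (Y_n)_{1≤n≤N} solve Y_n' = 2^{((2β+1)/3)n - (β+2)/3} (Y_{n-1}² - 2 Y_n Y_{n+1}) for n = 1,…,N with conventions Y_0 ≡ 0 and Y_{N+1} := Y_N. Define A := {(x,y) ∈ [0,1]² : h(x) ≤ y ≤ g(x)} with g(x) = (4/5)x + 1/2 and h(x) = (1/2)((x - 1/12)/(1 - 1/12))³ (h taken as 0 for x ≤ 1/12, and the constraint y ≤ g(x) only active where g ≤ 1). If (Y_n(0), Y_{n+1}(0)) ∈ A for all n ≤ N-1, then (Y_n(t), Y_{n+1}(t)) ∈ A for all n ≤ N-1 and all t ≥ 0. -/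
/-!
Thicken the region by the margin `s(t) = ε e^{K t}`, `K = 31 c_N`, where `c_n` is the rate of the
`n`-th equation, and regard each of the six inequalities cutting out `A`, for each consecutive pair,
as a wall. At a first time where some wall reaches the margin, the other walls control the two
neighbouring components, and that wall moves at speed at most `30 c_{n+1} s < s'`; so no wall is
ever crossed while `s ≤ 1/100`, and letting `ε → 0` gives invariance of `A`. The two curved walls
are where `β ≥ 1` enters, through `c_{n+1} ≥ 2 c_n`, which dominates the flux coming from the
left neighbour.
-/

open Set Filter Topology Real

theorem HasDerivAt.eventually_lt_of_le {f g : ℝ → ℝ} {f' g' x : ℝ} (hf : HasDerivAt f f' x)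
    (hg : HasDerivAt g g' x) (hle : f x ≤ g x) (hder : f x = g x → f' < g') :
    ∀ᶠ y in 𝓝[>] x, f y < g y := by
  rcases hle.lt_or_eq with hlt | heq
  · exact (hf.continuousAt.eventually_lt hg.continuousAt hlt).filter_mono nhdsWithin_le_nhds
  · have hslope := ((hf.sub hg).hasDerivWithinAt (s := Ioi x)).limsup_slope_le' (lt_irrefl x)
      (sub_neg.2 (hder heq))
    filter_upwards [hslope, self_mem_nhdsWithin] with y hy hxy
    rw [slope_neg_iff_of_le (le_of_lt hxy)] at hy
    simpa [heq] using hy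

theorem forall_le_of_deriv_lt_deriv_boundary {ι : Type*} {I : Finset ι} {F F' : ι → ℝ → ℝ}
    {B B' : ℝ → ℝ} {a b : ℝ} (hF : ∀ i ∈ I, ∀ t ∈ Icc a b, HasDerivAt (F i) (F' i t) t)
    (hB : ∀ t ∈ Icc a b, HasDerivAt B (B' t) t) (ha : ∀ i ∈ I, F i a ≤ B a)
    (bound : ∀ t ∈ Ico a b, (∀ i ∈ I, F i t ≤ B t) → ∀ i ∈ I, F i t = B t → F' i t < B' t) :
    ∀ t ∈ Icc a b, ∀ i ∈ I, F i t ≤ B t := by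
  set S := {t | ∀ i ∈ I, F i t ≤ B t}
  have hclosed : IsClosed (S ∩ Icc a b) := by
    have hS : S ∩ Icc a b = Icc a b ∩ ⋂ i ∈ I, {t ∈ Icc a b | F i t ≤ B t} := by
      ext t
      simp only [S, mem_inter_iff, mem_iInter, mem_ofPred_eq]
      exact ⟨fun ⟨h, hI⟩ => ⟨hI, fun i hi => ⟨hI, h i hi⟩⟩,
        fun ⟨hI, h⟩ => ⟨fun i hi => (h i hi).2, hI⟩⟩
    rw [hS]
    exact isClosed_Icc.inter <| isClosed_biInter fun i hi => isClosed_Icc.isClosed_le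
      (fun t ht => (hF i hi t ht).continuousAt.continuousWithinAt)
      (fun t ht => (hB t ht).continuousAt.continuousWithinAt)
  refine fun t ht => hclosed.Icc_subset_of_forall_mem_nhdsWithin ha ?_ ht
  rintro t ⟨htS, ht⟩
  have htI : t ∈ Icc a b := Ico_subset_Icc_self ht
  have hlt : ∀ i ∈ I, ∀ᶠ u in 𝓝[>] t, F i u < B u := fun i hi =>
    (hF i hi t htI).eventually_lt_of_le (hB t htI) (htS i hi) (bound t ht htS i hi)
  filter_upwards [(eventually_all_finset I).2 hlt] with u hu i hi using (hu i hi).le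

noncomputable def lowerCurve (x : ℝ) : ℝ :=
  if x ≤ 1/12 then 0 else 1/2 * ((x - 1/12) / (11/12)) ^ 3

noncomputable def lowerCurveDeriv (x : ℝ) : ℝ :=
  if x ≤ 1/12 then 0 else 3/2 * ((x - 1/12) / (11/12)) ^ 2 * (12/11)

lemma lowerCurve_of_le {x : ℝ} (h : x ≤ 1/12) : lowerCurve x = 0 := if_pos h

lemma lowerCurve_of_lt {x : ℝ} (h : 1/12 < x) : lowerCurve x = 1/2 * ((x - 1/12) / (11/12)) ^ 3 :=
  if_neg h.not_ge

lemma lowerCurveDeriv_of_le {x : ℝ} (h : x ≤ 1/12) : lowerCurveDeriv x = 0 := if_pos h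

lemma lowerCurveDeriv_of_lt {x : ℝ} (h : 1/12 < x) :
    lowerCurveDeriv x = 3/2 * ((x - 1/12) / (11/12)) ^ 2 * (12/11) :=
  if_neg h.not_ge

lemma lowerCurve_nonneg (x : ℝ) : 0 ≤ lowerCurve x := by
  unfold lowerCurve; split_ifs
  · rfl
  · have : 0 ≤ x - 1/12 := by linarith
    positivity

lemma lowerCurveDeriv_nonneg (x : ℝ) : 0 ≤ lowerCurveDeriv x := by
  unfold lowerCurveDeriv; split_ifs <;> positivity

lemma continuous_lowerCurve : Continuous lowerCurve :=
  Continuous.if_le continuous_const (by fun_prop) continuous_id continuous_const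
    fun x hx => by simp [hx]

lemma continuous_lowerCurveDeriv : Continuous lowerCurveDeriv :=
  Continuous.if_le continuous_const (by fun_prop) continuous_id continuous_const
    fun x hx => by simp [hx]

lemma hasDerivAt_lowerCurve (x : ℝ) : HasDerivAt lowerCurve (lowerCurveDeriv x) x := by
  refine hasDerivAt_of_hasDerivAt_of_ne' (x := 1/12) (fun y hy => ?_)
    continuous_lowerCurve.continuousAt continuous_lowerCurveDeriv.continuousAt x
  rcases hy.lt_or_gt with hy | hy
  · rw [lowerCurveDeriv_of_le hy.le]
    exact (hasDerivAt_const y 0).congr_of_eventuallyEq <|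
      (eventually_lt_nhds hy).mono fun z hz => lowerCurve_of_le hz.le
  · have hpoly : HasDerivAt (fun z => 1/2 * ((z - 1/12) / (11/12)) ^ 3) (lowerCurveDeriv y) y := by
      rw [lowerCurveDeriv_of_lt hy]
      refine ((((hasDerivAt_id' y).sub_const (1/12)).div_const (11/12)).pow 3 |>.const_mul
        (1/2)).congr_deriv ?_
      push_cast; ring
    exact hpoly.congr_of_eventuallyEq <|
      (eventually_gt_nhds hy).mono fun z hz => lowerCurve_of_lt hz

lemma lowerCurve_le_add {x s : ℝ} (hs0 : 0 ≤ s) (hs1 : s ≤ 1/100) (hx0 : -s ≤ x) (hx1 : x ≤ 1 + s) :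
    lowerCurve x ≤ x + s := by
  rcases le_or_gt x (1/12) with h | h
  · rw [lowerCurve_of_le h]; linarith
  · rw [lowerCurve_of_lt h]
    nlinarith [sq_nonneg (x-1/12), mul_nonneg (by linarith : (0:ℝ) ≤ x - 1/12) (sq_nonneg (x-1/12))]

lemma one_half_le_lowerCurve {x : ℝ} (hx : 1 ≤ x) : 1/2 ≤ lowerCurve x := by
  rw [lowerCurve_of_lt (by linarith)]
  have h : (1:ℝ) ≤ (x - 1/12) / (11/12) := by
    rw [le_div_iff₀ (by norm_num)]; linarith
  nlinarith [one_le_pow₀ (n := 3) h]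

def transfer (a x y : ℝ) : ℝ := a ^ 2 - 2 * x * y

lemma neg_le_transfer_of_eq_neg {a x y s : ℝ} (hs0 : 0 ≤ s) (hs1 : s ≤ 1/2) (hx : x = -s)
    (hy : -s ≤ y) : -s ≤ transfer a x y := by
  subst hx
  unfold transfer
  nlinarith [sq_nonneg a, mul_nonneg hs0 (by linarith : 0 ≤ y + s)]

lemma transfer_le_of_eq_one_add {a x y s : ℝ} (hs0 : 0 ≤ s) (hs1 : s ≤ 1/3) (hx : x = 1 + s)
    (hy : 1/2 - s ≤ y) (ha0 : -s ≤ a) (ha1 : a ≤ 1 + s) : transfer a x y ≤ 4 * s := by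
  subst hx
  unfold transfer
  nlinarith [mul_le_mul_of_nonneg_left hy (by linarith : (0:ℝ) ≤ 2 * (1 + s))]

lemma transfer_lowerCurve_of_eq_upperLine {x y s : ℝ} (hx : 0 ≤ x) (hs : 0 ≤ s)
    (hy : y = 4/5 * x + 1/2 + s) : 2 * transfer x y (lowerCurve y) + 8/5 * x * y ≤ 0 := by
  subst hy
  rw [lowerCurve_of_lt (by linarith)]
  unfold transfer
  nlinarith [sq_nonneg (x - 359/1000), sq_nonneg x, sq_nonneg s, mul_nonneg hs hx,
    sq_nonneg (x - 1/2), sq_nonneg (x * s)]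

lemma transfer_sub_le_of_eq_upperLine {c d a x y w s : ℝ} (hc : 0 < c) (hcd : 2 * c ≤ d)
    (hs : 0 < s) (hs1 : s ≤ 1/100) (hy : y = 4/5 * x + 1/2 + s) (hx0 : -s ≤ x) (hy1 : y ≤ 1 + s)
    (hw : lowerCurve y - s ≤ w) :
    d * transfer x y w - 4/5 * (c * transfer a x y) ≤ 3 * (d * s) := by
  unfold transfer
  have hd0 : 0 < d := by linarith
  have hy12 : 1/2 ≤ y := by rw [hy]; linarith
  have hH0 : 0 ≤ lowerCurve y := lowerCurve_nonneg y
  have hdw : d * (x^2 - 2*y*w) ≤ d * (x^2 - 2*y*lowerCurve y + 2*y*s) :=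
    mul_le_mul_of_nonneg_left (by nlinarith) hd0.le
  have hys : d * (2*y*s) ≤ 3 * (d*s) := by
    nlinarith [mul_nonneg (mul_nonneg hd0.le hs.le) (by linarith : (0:ℝ) ≤ 1 + s - y),
      mul_nonneg (mul_nonneg hd0.le hs.le) (by linarith : (0:ℝ) ≤ 1/100 - s)]
  have ha2 : 0 ≤ c * a^2 := mul_nonneg hc.le (sq_nonneg a)
  rcases le_or_gt 0 x with hxp | hxn
  · have hline := transfer_lowerCurve_of_eq_upperLine hxp hs.le hy
    unfold transfer at hline
    have hneg : x^2 - 2*y*lowerCurve y ≤ 0 := by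
      nlinarith [mul_nonneg hxp (by linarith : (0:ℝ) ≤ y)]
    nlinarith [mul_nonpos_of_nonneg_of_nonpos (by linarith : 0 ≤ d - 2*c) hneg,
      mul_le_mul_of_nonneg_left hline hc.le]
  · have hHlow : 125/2662 ≤ lowerCurve y := by
      rw [lowerCurve_of_lt (by linarith)]
      nlinarith [sq_nonneg (y - 1/2),
        mul_nonneg (by linarith : (0:ℝ) ≤ y - 1/2) (sq_nonneg (y - 1/2))]
    have hxy : c * (x*y) ≤ 0 := mul_nonpos_of_nonneg_of_nonpos hc.le
      (mul_nonpos_of_nonpos_of_nonneg hxn.le (by linarith))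
    have hneg : x^2 - 2*y*lowerCurve y ≤ 0 := by
      nlinarith [mul_nonneg (by linarith : (0:ℝ) ≤ y - 1/2)
        (by linarith : (0:ℝ) ≤ lowerCurve y - 125/2662)]
    nlinarith [mul_nonpos_of_nonneg_of_nonpos hd0.le hneg]

lemma lowerCurveDeriv_mul_le_transfer {x s : ℝ} (hx : 1/12 < x) (hx1 : x ≤ 1 + s) (hs0 : 0 ≤ s)
    (hs1 : s ≤ 1/100) :
    lowerCurveDeriv x * ((1 + s) ^ 2 - 2 * x * (lowerCurve x - s)) ≤
      2 * transfer x (lowerCurve x - s) (4/5 * (lowerCurve x - s) + 1/2 + s) + 50 * s := by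
  rw [lowerCurve_of_lt hx, lowerCurveDeriv_of_lt hx]
  unfold transfer
  have hx' : x ≤ 101/100 := by linarith
  have hx12 : 1/12 ≤ x := hx.le
  -- the unperturbed inequality, at `s = 0`
  have h0 : 3/2 * ((x-1/12)/(11/12))^2 * (12/11) * (1 - 2*x*(1/2*((x-1/12)/(11/12))^3))
      ≤ 2*(x^2 - 2*(1/2*((x-1/12)/(11/12))^3)*(4/5*(1/2*((x-1/12)/(11/12))^3)+1/2)) := by
    nlinarith [sq_nonneg (x - 795/1000), sq_nonneg ((x-1/12)^2 - 507/1000),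
      sq_nonneg ((x-1/12)^3 - 36/100), mul_nonneg (sub_nonneg.2 hx12) (sub_nonneg.2 hx12),
      sq_nonneg (x-1/2), sq_nonneg ((x-1/12)*(x-795/1000)), sq_nonneg ((x-1/12)^2*(x-795/1000))]
  nlinarith [h0, mul_nonneg hs0 hs0, mul_nonneg hs0 (sub_nonneg.2 hx12),
    mul_nonneg (mul_nonneg hs0 (sub_nonneg.2 hx12)) (sub_nonneg.2 hx12), sq_nonneg (x-1/12),
    mul_nonneg hs0 (sq_nonneg (x-1/12)), mul_nonneg (mul_nonneg hs0 hs0) hs0,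
    mul_nonneg (mul_nonneg hs0 hs0) (sub_nonneg.2 hx12)]

lemma transfer_lowerCurve_nonneg {x s : ℝ} (hx : 1/12 < x) (hx1 : x ≤ 1 + s) (hs0 : 0 ≤ s)
    (hs1 : s ≤ 1/100) :
    0 ≤ transfer x (lowerCurve x - s) (4/5 * (lowerCurve x - s) + 1/2 + s) := by
  have hH0 := lowerCurve_nonneg x
  rw [lowerCurve_of_lt hx] at hH0 ⊢
  unfold transfer
  have hp : 0 ≤ x - 1/12 := by linarith
  have hq : 0 ≤ 101/100 - x := by linarith
  have hQ : 1/200 ≤ x^2 - 8/5*(1/2*((x-1/12)/(11/12))^3)^2 - 1/2*((x-1/12)/(11/12))^3 := by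
    nlinarith [mul_nonneg hp hq, mul_nonneg (mul_nonneg hp hp) hq,
      mul_nonneg (mul_nonneg (mul_nonneg hp hp) hp) hq,
      mul_nonneg (mul_nonneg (mul_nonneg (mul_nonneg hp hp) hp) hp) hq,
      mul_nonneg (mul_nonneg (mul_nonneg (mul_nonneg (mul_nonneg hp hp) hp) hp) hp) hq,
      sq_nonneg ((x-1/12)^3 - 1/4), sq_nonneg ((x-1/12)^2 - 1/3), mul_nonneg hp hp]
  have hb : 1/2*((x-1/12)/(11/12))^3 ≤ 13/25 := by
    nlinarith [mul_nonneg hp hp, mul_nonneg (mul_nonneg hp hp) hp]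
  nlinarith [mul_nonneg hs0 hs0, mul_nonneg hs0 hH0, mul_nonneg (mul_nonneg hs0 hs0) hs0]

lemma lowerCurveDeriv_mul_sub_le_of_eq_lowerCurve {c d a x y w s : ℝ} (hc : 0 < c)
    (hcd : 2 * c ≤ d) (hs : 0 < s) (hs1 : s ≤ 1/100) (hy : y = lowerCurve x - s)
    (hx1 : x ≤ 1 + s) (ha0 : -s ≤ a) (ha1 : a ≤ 1 + s) (hw0 : -s ≤ w)
    (hw1 : w ≤ 4/5 * y + 1/2 + s) :
    lowerCurveDeriv x * (c * transfer a x y) - d * transfer x y w ≤ 30 * (d * s) := by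
  have hd0 : 0 < d := by linarith
  have hy0 : -s ≤ y := by rw [hy]; linarith [lowerCurve_nonneg x]
  have hyw : 2*y*w ≤ 2*y*(4/5*y+1/2+s) + 2*s := by
    rcases le_or_gt 0 y with h | h
    · nlinarith [mul_le_mul_of_nonneg_left hw1 (by linarith : (0:ℝ) ≤ 2*y)]
    · have h1 : y*w ≤ y*(-s) := by nlinarith
      nlinarith [h1, mul_nonneg hs.le hs.le]
  have hwd : d * (transfer x y (4/5*y+1/2+s) - 2*s) ≤ d * transfer x y w := by
    unfold transfer
    exact mul_le_mul_of_nonneg_left (by linarith) hd0.le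
  rcases le_or_gt x (1/12) with hx12 | hx12
  · rw [lowerCurveDeriv_of_le hx12, zero_mul, zero_sub]
    have hy' : y = -s := by rw [hy, lowerCurve_of_le hx12]; ring
    subst hy'
    unfold transfer at hwd ⊢
    nlinarith [mul_nonneg hd0.le (sq_nonneg x), mul_nonneg (mul_nonneg hd0.le hs.le) hs.le,
      mul_pos hd0 hs, mul_nonneg (mul_nonneg (mul_nonneg hd0.le hs.le) hs.le) hs.le]
  · have hD0 := lowerCurveDeriv_nonneg x
    have hkey := lowerCurveDeriv_mul_le_transfer hx12 hx1 hs.le hs1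
    have hnonneg := transfer_lowerCurve_nonneg hx12 hx1 hs.le hs1
    rw [← hy] at hkey hnonneg
    have ha2 : transfer a x y ≤ (1 + s) ^ 2 - 2 * x * y := by
      unfold transfer; nlinarith
    have step1 : lowerCurveDeriv x * (c * transfer a x y) ≤
        c * (2 * transfer x y (4/5*y+1/2+s) + 50 * s) := by
      rw [mul_left_comm]
      exact mul_le_mul_of_nonneg_left ((mul_le_mul_of_nonneg_left ha2 hD0).trans hkey) hc.le
    nlinarith [mul_nonneg (by linarith : 0 ≤ d - 2 * c) hnonneg,
      mul_nonneg (by linarith : 0 ≤ d - 2 * c) hs.le]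

noncomputable def wall : Fin 6 → ℝ × ℝ → ℝ
  | 0, p => -p.1
  | 1, p => p.1 - 1
  | 2, p => -p.2
  | 3, p => p.2 - 1
  | 4, p => lowerCurve p.1 - p.2
  | 5, p => p.2 - (4/5 * p.1 + 1/2)

noncomputable def wallDeriv : Fin 6 → ℝ × ℝ → ℝ × ℝ → ℝ
  | 0, _, v => -v.1
  | 1, _, v => v.1
  | 2, _, v => -v.2
  | 3, _, v => v.2
  | 4, p, v => lowerCurveDeriv p.1 * v.1 - v.2
  | 5, _, v => v.2 - 4/5 * v.1

lemma mem_region_iff_forall_wall_nonpos (p : ℝ × ℝ) :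
    p ∈ {p : ℝ × ℝ | p.1 ∈ Set.Icc (0:ℝ) 1 ∧ p.2 ∈ Set.Icc (0:ℝ) 1 ∧
      (if p.1 ≤ 1/12 then (0:ℝ) else (1/2) * ((p.1 - 1/12) / (11/12)) ^ 3) ≤ p.2 ∧
      p.2 ≤ 4/5 * p.1 + 1/2} ↔ ∀ k, wall k p ≤ 0 := by
  constructor
  · rintro ⟨⟨h0, h1⟩, ⟨h2, h3⟩, h4, h5⟩ k
    fin_cases k <;> simp only [wall, lowerCurve] <;> linarith
  · intro h
    have h0 : -p.1 ≤ 0 := h 0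
    have h1 : p.1 - 1 ≤ 0 := h 1
    have h2 : -p.2 ≤ 0 := h 2
    have h3 : p.2 - 1 ≤ 0 := h 3
    have h4 : lowerCurve p.1 - p.2 ≤ 0 := h 4
    have h5 : p.2 - (4/5 * p.1 + 1/2) ≤ 0 := h 5
    exact ⟨⟨by linarith, by linarith⟩, ⟨by linarith, by linarith⟩,
      by unfold lowerCurve at h4; linarith, by linarith⟩

lemma hasDerivAt_wall (k : Fin 6) {f g : ℝ → ℝ} {f' g' t : ℝ} (hf : HasDerivAt f f' t)
    (hg : HasDerivAt g g' t) :
    HasDerivAt (fun t => wall k (f t, g t)) (wallDeriv k (f t, g t) (f', g')) t := by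
  fin_cases k
  · exact hf.neg
  · exact hf.sub_const 1
  · exact hg.neg
  · exact hg.sub_const 1
  · exact ((hasDerivAt_lowerCurve (f t)).comp t hf).sub hg
  · exact hg.sub ((hf.const_mul (4/5)).add_const (1/2))

lemma fst_mem_Icc_of_forall_wall_le {p : ℝ × ℝ} {s : ℝ} (h : ∀ k, wall k p ≤ s) :
    p.1 ∈ Icc (-s) (1 + s) := by
  have h0 : -p.1 ≤ s := h 0
  have h1 : p.1 - 1 ≤ s := h 1
  constructor <;> linarith

lemma snd_mem_Icc_of_forall_wall_le {p : ℝ × ℝ} {s : ℝ} (h : ∀ k, wall k p ≤ s) :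
    p.2 ∈ Icc (-s) (1 + s) := by
  have h2 : -p.2 ≤ s := h 2
  have h3 : p.2 - 1 ≤ s := h 3
  constructor <;> linarith

lemma wall_diag_le {y s : ℝ} (hs0 : 0 ≤ s) (hs1 : s ≤ 1/100) (hy : y ∈ Icc (-s) (1 + s))
    (k : Fin 6) : wall k (y, y) ≤ s := by
  obtain ⟨hy0, hy1⟩ := hy
  fin_cases k <;> simp only [wall]
  all_goals first | linarith | linarith [lowerCurve_le_add hs0 hs1 hy0 hy1]

theorem wallDeriv_le_of_wall_eq {c d a x y w s : ℝ} (hc : 0 < c) (hcd : 2 * c ≤ d) (hs : 0 < s)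
    (hs1 : s ≤ 1/100) (ha : a ∈ Icc (-s) (1 + s)) (hxy : ∀ k, wall k (x, y) ≤ s)
    (hyw : ∀ k, wall k (y, w) ≤ s) {k : Fin 6} (hk : wall k (x, y) = s) :
    wallDeriv k (x, y) (c * transfer a x y, d * transfer x y w) ≤ 30 * (d * s) := by
  obtain ⟨hx0, hx1⟩ : x ∈ Icc (-s) (1 + s) := fst_mem_Icc_of_forall_wall_le hxy
  obtain ⟨hy0, hy1⟩ : y ∈ Icc (-s) (1 + s) := snd_mem_Icc_of_forall_wall_le hxy
  obtain ⟨hw0, -⟩ : w ∈ Icc (-s) (1 + s) := snd_mem_Icc_of_forall_wall_le hyw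
  have hxy4 : lowerCurve x - y ≤ s := hxy 4
  have hyw4 : lowerCurve y - w ≤ s := hyw 4
  have hyw5 : w - (4/5 * y + 1/2) ≤ s := hyw 5
  have hcs : c * s ≤ d * s := by nlinarith
  have hds : 0 ≤ d * s := by nlinarith
  fin_cases k <;> simp only [wall] at hk <;> simp only [wallDeriv]
  · have := neg_le_transfer_of_eq_neg (a := a) hs.le (by linarith) (by linarith : x = -s) hy0
    nlinarith
  · have hy : 1/2 - s ≤ y := by linarith [one_half_le_lowerCurve (by linarith : 1 ≤ x)]
    have := transfer_le_of_eq_one_add hs.le (by linarith) (by linarith : x = 1 + s) hy ha.1 ha.2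
    nlinarith
  · have := neg_le_transfer_of_eq_neg (a := x) hs.le (by linarith) (by linarith : y = -s) hw0
    nlinarith
  · have hw : 1/2 - s ≤ w := by linarith [one_half_le_lowerCurve (by linarith : 1 ≤ y)]
    have := transfer_le_of_eq_one_add hs.le (by linarith) (by linarith : y = 1 + s) hw hx0 hx1
    nlinarith
  · exact lowerCurveDeriv_mul_sub_le_of_eq_lowerCurve hc hcd hs hs1 (by linarith) hx1 ha.1 ha.2
      hw0 (by linarith)
  · have := transfer_sub_le_of_eq_upperLine (a := a) (w := w) hc hcd hs hs1 (by linarith) hx0 hy1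
      (by linarith)
    linarith

noncomputable def rate (β : ℝ) (n : ℕ) : ℝ := (2:ℝ) ^ ((2*β+1)/3 * (n:ℝ) - (β+2)/3)

lemma rate_pos (β : ℝ) (n : ℕ) : 0 < rate β n := Real.rpow_pos_of_pos two_pos _

lemma rate_mono {β : ℝ} (hβ : 0 ≤ 2*β+1) : Monotone (rate β) := fun m n hmn => by
  refine Real.rpow_le_rpow_of_exponent_le one_le_two ?_
  have : (m:ℝ) ≤ n := Nat.cast_le.2 hmn
  nlinarith

lemma two_mul_rate_le_rate_succ {β : ℝ} (hβ : 1 ≤ β) (n : ℕ) : 2 * rate β n ≤ rate β (n + 1) := by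
  have hsucc : rate β (n + 1) = 2 ^ ((2*β+1)/3) * rate β n := by
    rw [rate, rate, ← Real.rpow_add two_pos]
    push_cast; ring_nf
  have htwo : (2:ℝ) ≤ 2 ^ ((2*β+1)/3) := by
    simpa using Real.rpow_le_rpow_of_exponent_le one_le_two (by linarith : (1:ℝ) ≤ (2*β+1)/3)
  rw [hsucc]
  exact mul_le_mul_of_nonneg_right htwo (rate_pos β n).le

lemma neighbours_of_forall_wall_le {N n : ℕ} {y : ℕ → ℝ} {s : ℝ} (hy0 : y 0 = 0)
    (hyN : y (N + 1) = y N) (hs0 : 0 ≤ s) (hs1 : s ≤ 1/100)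
    (h : ∀ m ∈ Finset.Ico 1 N, ∀ k, wall k (y m, y (m + 1)) ≤ s) (hn : n ∈ Finset.Ico 1 N) :
    y (n - 1) ∈ Icc (-s) (1 + s) ∧ ∀ k, wall k (y (n + 1), y (n + 2)) ≤ s := by
  rw [Finset.mem_Ico] at hn
  constructor
  · rcases Nat.lt_or_ge 1 n with hn1 | hn1
    · exact fst_mem_Icc_of_forall_wall_le (h (n - 1) (Finset.mem_Ico.2 ⟨by omega, by omega⟩))
    · rw [show n - 1 = 0 by omega, hy0]
      constructor <;> linarith
  · rcases Nat.lt_or_ge (n + 1) N with hn1 | hn1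
    · exact h (n + 1) (Finset.mem_Ico.2 ⟨by omega, hn1⟩)
    · obtain rfl : N = n + 1 := by omega
      rw [hyN]
      exact wall_diag_le hs0 hs1 (snd_mem_Icc_of_forall_wall_le (h n (Finset.mem_Ico.2 hn)))

theorem wall_le_margin {β : ℝ} (hβ : 1 ≤ β) {N : ℕ} {Y : ℕ → ℝ → ℝ} (hY0 : ∀ t, Y 0 t = 0)
    (hYtop : ∀ t, Y (N + 1) t = Y N t)
    (hODE : ∀ n, 1 ≤ n → n ≤ N → ∀ t, 0 ≤ t →
      HasDerivAt (Y n) (rate β n * transfer (Y (n - 1) t) (Y n t) (Y (n + 1) t)) t)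
    (hinit : ∀ n ∈ Finset.Ico 1 N, ∀ k, wall k (Y n 0, Y (n + 1) 0) ≤ 0) {ε b : ℝ} (hε : 0 < ε)
    (hb : ε * exp (31 * rate β N * b) ≤ 1/100) :
    ∀ t ∈ Icc 0 b, ∀ n ∈ Finset.Ico 1 N, ∀ k,
      wall k (Y n t, Y (n + 1) t) ≤ ε * exp (31 * rate β N * t) := by
  set K := 31 * rate β N
  set B : ℝ → ℝ := fun t => ε * exp (K * t)
  have hBpos : ∀ t, 0 < B t := fun t => by positivity
  have hB : ∀ t, HasDerivAt B (K * B t) t := fun t => by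
    refine (((hasDerivAt_id' t).const_mul K).exp.const_mul ε).congr_deriv ?_
    simp only [B]; ring
  have hBsmall : ∀ t ≤ b, B t ≤ 1/100 := fun t ht => hb.trans' <| by
    simp only [B]
    gcongr
    exact mul_nonneg (by norm_num) (rate_pos β N).le
  set Ydot : ℕ → ℝ → ℝ := fun m t => rate β m * transfer (Y (m - 1) t) (Y m t) (Y (m + 1) t)
  have key := forall_le_of_deriv_lt_deriv_boundary (I := Finset.univ ×ˢ Finset.Ico 1 N)
    (F := fun i t => wall i.1 (Y i.2 t, Y (i.2 + 1) t))
    (F' := fun i t => wallDeriv i.1 (Y i.2 t, Y (i.2 + 1) t) (Ydot i.2 t, Ydot (i.2 + 1) t))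
    (B' := fun t => K * B t) (a := 0) (b := b) ?deriv (fun t _ => hB t) ?init ?bound
  · exact fun t ht n hn k => key t ht (k, n) (Finset.mem_product.2 ⟨Finset.mem_univ k, hn⟩)
  case deriv =>
    rintro ⟨k, n⟩ hi t ht
    obtain ⟨hn1, hnN⟩ := Finset.mem_Ico.1 (Finset.mem_product.1 hi).2
    exact hasDerivAt_wall k (hODE n hn1 hnN.le t ht.1) (hODE (n + 1) (by omega) hnN t ht.1)
  case init =>
    rintro ⟨k, n⟩ hi
    exact (hinit n (Finset.mem_product.1 hi).2 k).trans (hBpos 0).le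
  case bound =>
    rintro t ht hall ⟨k, n⟩ hi heq
    have hn : n ∈ Finset.Ico 1 N := (Finset.mem_product.1 hi).2
    have hall' : ∀ m ∈ Finset.Ico 1 N, ∀ k, wall k (Y m t, Y (m + 1) t) ≤ B t :=
      fun m hm k => hall (k, m) (Finset.mem_product.2 ⟨Finset.mem_univ k, hm⟩)
    obtain ⟨ha, hnext⟩ := neighbours_of_forall_wall_le (y := fun m => Y m t) (hY0 t) (hYtop t)
      (hBpos t).le (hBsmall t ht.2.le) hall' hn
    have hrate : rate β (n + 1) ≤ rate β N :=
      rate_mono (by linarith) (Finset.mem_Ico.1 hn).2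
    calc wallDeriv k (Y n t, Y (n + 1) t) (Ydot n t, Ydot (n + 1) t)
        ≤ 30 * (rate β (n + 1) * B t) :=
          wallDeriv_le_of_wall_eq (rate_pos β n) (two_mul_rate_le_rate_succ hβ n) (hBpos t)
            (hBsmall t ht.2.le) ha (hall' n hn) hnext heq
      _ ≤ 30 * (rate β N * B t) := by gcongr
      _ < K * B t := by have := rate_pos β N; have := hBpos t; nlinarith

theorem wall_nonpos {β : ℝ} (hβ : 1 ≤ β) {N : ℕ} {Y : ℕ → ℝ → ℝ} (hY0 : ∀ t, Y 0 t = 0)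
    (hYtop : ∀ t, Y (N + 1) t = Y N t)
    (hODE : ∀ n, 1 ≤ n → n ≤ N → ∀ t, 0 ≤ t →
      HasDerivAt (Y n) (rate β n * transfer (Y (n - 1) t) (Y n t) (Y (n + 1) t)) t)
    (hinit : ∀ n ∈ Finset.Ico 1 N, ∀ k, wall k (Y n 0, Y (n + 1) 0) ≤ 0) {t : ℝ} (ht : 0 ≤ t)
    {n : ℕ} (hn : n ∈ Finset.Ico 1 N) (k : Fin 6) : wall k (Y n t, Y (n + 1) t) ≤ 0 := by
  set K := 31 * rate β N
  have hlim : Tendsto (fun ε => ε * exp (K * t)) (𝓝[>] 0) (𝓝 0) := by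
    simpa using ((continuous_mul_const (exp (K * t))).tendsto 0).mono_left nhdsWithin_le_nhds
  refine ge_of_tendsto hlim ?_
  filter_upwards [Ioo_mem_nhdsGT (by positivity : (0:ℝ) < exp (-(K * t)) / 100)]
    with ε ⟨hε0, hε1⟩
  refine wall_le_margin hβ hY0 hYtop hODE hinit hε0 ?_ t ⟨ht, le_rfl⟩ n hn k
  calc ε * exp (K * t) ≤ exp (-(K * t)) / 100 * exp (K * t) := by gcongr
    _ = 1/100 := by rw [Real.exp_neg]; field_simp

theorem dyadic_truncated_invariant_region_general
    (β : ℝ) (hβ : 1 ≤ β) (N : ℕ)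
    (Y : ℕ → ℝ → ℝ)
    (hY0 : ∀ t : ℝ, Y 0 t = 0)
    (hYtop : ∀ t : ℝ, Y (N+1) t = Y N t)
    (hODE : ∀ n : ℕ, 1 ≤ n → n ≤ N → ∀ t : ℝ, 0 ≤ t →
      HasDerivAt (Y n)
        ((2:ℝ) ^ ((2*β+1)/3 * (n:ℝ) - (β+2)/3)
          * ((Y (n-1) t) ^ 2 - 2 * Y n t * Y (n+1) t)) t)
    (A : Set (ℝ × ℝ))
    (hA : A = {p : ℝ × ℝ | p.1 ∈ Set.Icc (0:ℝ) 1 ∧ p.2 ∈ Set.Icc (0:ℝ) 1 ∧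
      (if p.1 ≤ 1/12 then (0:ℝ) else (1/2) * ((p.1 - 1/12) / (11/12)) ^ 3) ≤ p.2 ∧
      p.2 ≤ 4/5 * p.1 + 1/2})
    (hinit : ∀ n : ℕ, 1 ≤ n → n + 1 ≤ N → (Y n 0, Y (n+1) 0) ∈ A) :
    ∀ t : ℝ, 0 ≤ t → ∀ n : ℕ, 1 ≤ n → n + 1 ≤ N → (Y n t, Y (n+1) t) ∈ A := by
  subst hA
  have hinit' : ∀ n ∈ Finset.Ico 1 N, ∀ k, wall k (Y n 0, Y (n + 1) 0) ≤ 0 := fun n hn =>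
    have ⟨hn1, hnN⟩ := Finset.mem_Ico.1 hn
    (mem_region_iff_forall_wall_nonpos _).1 (hinit n hn1 hnN)
  intro t ht n hn1 hn2
  exact (mem_region_iff_forall_wall_nonpos _).2 fun k =>
    wall_nonpos hβ hY0 hYtop hODE hinit' ht (Finset.mem_Ico.2 ⟨hn1, hn2⟩) k

/-- The invariant region `A` for the truncated rescaled dyadic system:
if all consecutive pairs of the initial condition lie in `A`, they stay in `A`
for all `t ≥ 0`. Here `g x = (4/5)x + 1/2` and `h x = (1/2)((x-1/12)/(11/12))³`
(taken as `0` for `x ≤ 1/12`). -/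
theorem dyadic_truncated_invariant_region
    (β : ℝ) (hβ : 1 ≤ β) (N : ℕ) (hN : 1 ≤ N)
    (Y : ℕ → ℝ → ℝ)
    (hY0 : ∀ t : ℝ, Y 0 t = 0)
    (hYtop : ∀ t : ℝ, Y (N+1) t = Y N t)
    (hODE : ∀ n : ℕ, 1 ≤ n → n ≤ N → ∀ t : ℝ, 0 ≤ t →
      HasDerivAt (Y n)
        ((2:ℝ) ^ ((2*β+1)/3 * (n:ℝ) - (β+2)/3)
          * ((Y (n-1) t) ^ 2 - 2 * Y n t * Y (n+1) t)) t)
    (A : Set (ℝ × ℝ))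
    (hA : A = {p : ℝ × ℝ | p.1 ∈ Set.Icc (0:ℝ) 1 ∧ p.2 ∈ Set.Icc (0:ℝ) 1 ∧
      (if p.1 ≤ 1/12 then (0:ℝ) else (1/2) * ((p.1 - 1/12) / (11/12)) ^ 3) ≤ p.2 ∧
      p.2 ≤ 4/5 * p.1 + 1/2})
    (hinit : ∀ n : ℕ, 1 ≤ n → n + 1 ≤ N → (Y n 0, Y (n+1) 0) ∈ A) :
    ∀ t : ℝ, 0 ≤ t → ∀ n : ℕ, 1 ≤ n → n + 1 ≤ N → (Y n t, Y (n+1) t) ∈ A :=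
  dyadic_truncated_invariant_region_general β hβ N Y hY0 hYtop hODE A hA hinit
end
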